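/- arXiv:2201.08600 — 12 statements merged into one kernel-verified Lean document; each statement's English description precedes it below -/
import Mathlib

section
/- If f : {0,1}^n → {0,1}^n has two distinct fixed points x and y, then the signed interaction graph G(f) contains a positive cycle C such that x_i ≠ y_i for every vertex i of C. -/
/-- State of a Boolean network with `n` components. -/
abbrev BState (n : ℕ) := Fin n → Bool

/-- Positive arc `j → i` in the global interaction graph `G(f)`:
the discrete partial derivative `f_{ij}` is positive at some state. -/
def posArc {n : ℕ} (f : BState n → BState n) (j i : Fin n) : Prop :=
  ∃ x : BState n, f (Function.update x j true) i = true ∧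
    f (Function.update x j false) i = false

/-- Negative arc `j → i` in `G(f)`:
the discrete partial derivative `f_{ij}` is negative at some state. -/
def negArc {n : ℕ} (f : BState n → BState n) (j i : Fin n) : Prop :=
  ∃ x : BState n, f (Function.update x j true) i = false ∧
    f (Function.update x j false) i = true

/-- Unsigned arc `j → i` in the interaction graph: `f_i` depends on `x_j`. -/
def arc {n : ℕ} (f : BState n → BState n) (j i : Fin n) : Prop :=
  posArc f j i ∨ negArc f j i

/-- Arc of given sign (`true` = positive, `false` = negative). -/
def signedArc {n : ℕ} (f : BState n → BState n) (ε : Bool) (j i : Fin n) : Prop :=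
  if ε then posArc f j i else negArc f j i

/-- A signed cycle of `G(f)`: vertices `vert 0 → vert 1 → ⋯ → vert len → vert 0`
(so the length is `len + 1`), pairwise distinct, each consecutive arc present in
`G(f)` with sign `sign k`. -/
structure SignedCycle {n : ℕ} (f : BState n → BState n) where
  len : ℕ
  vert : Fin (len + 1) → Fin n
  inj : Function.Injective vert
  sign : Fin (len + 1) → Bool
  arcs : ∀ k : Fin (len + 1), signedArc f (sign k) (vert k) (vert (k + 1))

/-- Length (number of arcs) of a signed cycle. -/
def SignedCycle.length {n : ℕ} {f : BState n → BState n} (C : SignedCycle f) : ℕ :=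
  C.len + 1

/-- A cycle is positive iff it has an even number of negative arcs. -/
def SignedCycle.Positive {n : ℕ} {f : BState n → BState n} (C : SignedCycle f) : Prop :=
  Even (Finset.univ.filter (fun k => C.sign k = false)).card

/-- A cycle is negative iff it has an odd number of negative arcs. -/
def SignedCycle.Negative {n : ℕ} {f : BState n → BState n} (C : SignedCycle f) : Prop :=
  Odd (Finset.univ.filter (fun k => C.sign k = false)).card

/-- An unsigned cycle of the interaction graph. -/
structure UCycle {n : ℕ} (f : BState n → BState n) where
  len : ℕ
  vert : Fin (len + 1) → Fin n
  inj : Function.Injective vert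
  arcs : ∀ k : Fin (len + 1), arc f (vert k) (vert (k + 1))

/-- One step of the asynchronous dynamics `Γ(f)`. -/
def asyncStep {n : ℕ} (f : BState n → BState n) (x y : BState n) : Prop :=
  ∃ i : Fin n, f x i ≠ x i ∧ y = Function.update x i (f x i)

/-- There is a path of length `L` from `x` to `y` in `Γ(f)`. -/
def asyncPath {n : ℕ} (f : BState n → BState n) (x y : BState n) (L : ℕ) : Prop :=
  ∃ p : ℕ → BState n, p 0 = x ∧ p L = y ∧ ∀ k < L, asyncStep f (p k) (p (k + 1))

/-! Switching the coordinates of `x` to those of `y` one at a time, the first switch that changes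
`f_i` exhibits, for each `i` with `x i ≠ y i`, an in-neighbour `j` with `x j ≠ y j` whose arc
`j → i` is positive exactly when `y j = y i`. Following such in-neighbours inside the finite set
`{i | x i ≠ y i}` closes a cycle; its negative arcs are the places where `y` changes value around
the cycle, and there is an even number of those. -/

open Function

theorem Function.exists_iterate_mem_periodicPts {α : Type*} [Finite α] (g : α → α) (x : α) :
    ∃ m, g^[m] x ∈ periodicPts g := by
  obtain ⟨a, b, hab, heq⟩ := Finite.exists_ne_map_eq_of_infinite (fun t : ℕ => g^[t] x)
  wlog hlt : a < b generalizing a b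
  · exact this b a hab.symm heq.symm (hab.lt_or_gt.resolve_left hlt)
  refine ⟨a, mk_mem_periodicPts (n := b - a) (by omega) ?_⟩
  rw [IsPeriodicPt, IsFixedPt, ← iterate_add_apply, Nat.sub_add_cancel hlt.le]
  exact heq.symm

theorem exists_cycle_of_forall_exists_predecessor {α : Type*} [Finite α] (r : α → α → Prop)
    (P : α → Prop) (hP : ∀ i, P i → ∃ j, P j ∧ r j i) {i₀ : α} (h₀ : P i₀) :
    ∃ (L : ℕ) (v : Fin (L + 1) → α),
      Injective v ∧ (∀ k, P (v k)) ∧ ∀ k, r (v k) (v (k + 1)) := by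
  choose g hgP hgr using fun i : {i // P i} => hP i i.2
  set prev : {i // P i} → {i // P i} := fun i => ⟨g i, hgP i⟩
  obtain ⟨m, hm⟩ := exists_iterate_mem_periodicPts prev ⟨i₀, h₀⟩
  set s := prev^[m] ⟨i₀, h₀⟩
  obtain ⟨L, hL⟩ := Nat.exists_eq_succ_of_ne_zero (minimalPeriod_pos_of_mem_periodicPts hm).ne'
  -- the orbit of `s` under `prev` runs backwards along the arcs, hence the index `-k`
  refine ⟨L, fun k => (prev^[(-k : Fin (L + 1)).val] s).val, ?_, fun k => (prev^[_] s).2, ?_⟩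
  · intro k k' h
    have := iterate_injOn_Iio_minimalPeriod (f := prev) (x := s)
      (by simp [hL, (-k).isLt]) (by simp [hL, (-k').isLt]) (Subtype.ext h)
    exact neg_injective (Fin.ext this)
  · intro k
    have hk : prev^[(-(k + 1)).val + 1] s = prev^[(-k).val] s := by
      rw [← (isPeriodicPt_minimalPeriod prev s).iterate_mod_apply, hL,
        show -k = -(k + 1) + 1 by abel, Fin.val_add, Fin.val_one', Nat.add_mod_mod]
    dsimp only
    rw [← hk, iterate_succ_apply']
    exact hgr _

theorem exists_update_eq_of_ne {ι α : Type*} [Finite ι] [DecidableEq ι]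
    (g : (ι → α) → Bool) {x y : ι → α} (hxy : g x ≠ g y) :
    ∃ j u, x j ≠ y j ∧ g (update u j (x j)) = g x ∧ g (update u j (y j)) = g y := by
  have := Fintype.ofFinite ι
  -- walk from `x` to `y`, switching the coordinates of `s` one at a time
  suffices h : ∀ (s : Finset ι) (x : ι → α), (∀ j ∉ s, x j = y j) → g x ≠ g y →
      ∃ j u, x j ≠ y j ∧ g (update u j (x j)) = g x ∧ g (update u j (y j)) = g y from
    h Finset.univ x (by simp) hxy
  intro s
  induction s using Finset.induction_on with
  | empty => exact fun x hx hxy => absurd (congrArg g (funext fun j => hx j (by simp))) hxy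
  | insert a t hat ih =>
    intro x hx hxy
    by_cases hz : g (update x a (y a)) = g y
    · have hxa : x a ≠ y a := fun h => hxy (by rwa [← h, update_eq_self] at hz)
      exact ⟨a, x, hxa, by rw [update_eq_self], hz⟩
    · have hzt : ∀ j ∉ t, update x a (y a) j = y j := by
        intro j hj
        rcases eq_or_ne j a with rfl | hja
        · exact update_self ..
        · rw [update_of_ne hja]
          exact hx j (by simp [hja, hj])
      obtain ⟨j, u, hj, h₁, h₂⟩ := ih _ hzt hz
      have hja : j ≠ a := by rintro rfl; simp at hj
      have hzx : g (update x a (y a)) = g x := by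
        revert hz hxy; cases g (update x a (y a)) <;> cases g x <;> cases g y <;> simp
      rw [update_of_ne hja] at hj h₁
      exact ⟨j, u, hj, h₁.trans hzx, h₂⟩

theorem signedArc_of_update {n : ℕ} {f : BState n → BState n} {u : BState n} {i j : Fin n}
    {b c : Bool} (h : f (update u j b) i = c) (h' : f (update u j (!b)) i = !c) :
    signedArc f (b == c) j i := by
  cases b <;> cases c <;> simp_all [signedArc, posArc, negArc] <;> exact ⟨u, by simp_all⟩

theorem exists_signedArc_of_fixedPoints {n : ℕ} {f : BState n → BState n} {x y : BState n}
    (hx : f x = x) (hy : f y = y) {i : Fin n} (hi : x i ≠ y i) :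
    ∃ j, x j ≠ y j ∧ signedArc f (y j == y i) j i := by
  obtain ⟨j, u, hj, h₁, h₂⟩ := exists_update_eq_of_ne (fun z => f z i) (x := x) (y := y)
    (by simpa [hx, hy] using hi)
  refine ⟨j, hj, signedArc_of_update (u := u) (by simpa [hy] using h₂) ?_⟩
  rw [← Bool.eq_not_of_ne hj, ← Bool.eq_not_of_ne hi]
  simpa [hx] using h₁

theorem Fin.even_card_filter_ne_succ {m : ℕ} (b : Fin (m + 1) → Bool) :
    Even (Finset.univ.filter fun k => b k ≠ b (k + 1)).card := by
  rw [even_iff_two_dvd, ← ZMod.natCast_eq_zero_iff, Finset.card_filter, Nat.cast_sum]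
  have hchange : ∀ k, (((if b k ≠ b (k + 1) then 1 else 0 : ℕ)) : ZMod 2) =
      (b k).toNat + (b (k + 1)).toNat := by
    intro k
    cases b k <;> cases b (k + 1) <;> decide
  have hshift : ∑ k, ((b (k + 1)).toNat : ZMod 2) = ∑ k, ((b k).toNat : ZMod 2) :=
    Fintype.sum_equiv (Equiv.addRight 1) _ _ fun _ => rfl
  rw [Finset.sum_congr rfl fun k _ => hchange k, Finset.sum_add_distrib, hshift,
    CharTwo.add_self_eq_zero]

/-- If `f` has two distinct fixed points `x` and `y`, then `G(f)` has a positive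
cycle all of whose vertices `i` satisfy `x i ≠ y i`. -/
theorem stmt0 {n : ℕ} (f : BState n → BState n) (x y : BState n)
    (hx : f x = x) (hy : f y = y) (hxy : x ≠ y) :
    ∃ C : SignedCycle f, C.Positive ∧ ∀ k, x (C.vert k) ≠ y (C.vert k) := by
  obtain ⟨i₀, hi₀⟩ := Function.ne_iff.mp hxy
  obtain ⟨L, v, hinj, hvxy, harc⟩ := exists_cycle_of_forall_exists_predecessor
    (fun j i => signedArc f (y j == y i) j i) (fun i => x i ≠ y i)
    (fun i hi => exists_signedArc_of_fixedPoints hx hy hi) hi₀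
  refine ⟨⟨L, v, hinj, fun k => y (v k) == y (v (k + 1)), harc⟩, ?_, hvxy⟩
  simpa [SignedCycle.Positive] using Fin.even_card_filter_ne_succ (y ∘ v)
end

section
/- If I is a positive feedback vertex set of G(f) (a set of vertices meeting every positive cycle of G(f)), then f : {0,1}^n → {0,1}^n has at most 2^{|I|} fixed points. -/
lemma meanValue {n : ℕ} (f : BState n → BState n) (i : Fin n) :
    ∀ (m : ℕ) (x y : BState n),
      (Finset.univ.filter (fun j => x j ≠ y j)).card ≤ m →
      f x i ≠ f y i → ∃ j, x j ≠ y j ∧ signedArc f (x j == f x i) j i := by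
  intro m
  induction m with
  | zero =>
    intro x y hc hne
    exfalso
    apply hne
    have hxy : x = y := by
      funext j
      by_contra h
      have hj : j ∈ Finset.univ.filter (fun j => x j ≠ y j) := by
        simp [h]
      have := Finset.card_pos.mpr ⟨j, hj⟩
      omega
    rw [hxy]
  | succ m ih =>
    intro x y hc hne
    by_cases hxy : x = y
    · exact absurd (by rw [hxy]) hne
    · obtain ⟨j₀, hj₀⟩ := Function.ne_iff.mp hxy
      set y' := Function.update y j₀ (x j₀) with hy'
      by_cases h' : f x i = f y' i
      · refine ⟨j₀, hj₀, ?_⟩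
        have hyj : y j₀ = ! (x j₀) := by
          cases hb : x j₀ <;> cases hb' : y j₀ <;> simp_all
        have h1 : f (Function.update y j₀ (x j₀)) i = f x i := h'.symm
        have h2 : f (Function.update y j₀ (!(x j₀))) i = f y i := by
          rw [← hyj, Function.update_eq_self]
        cases hb : x j₀ <;> cases hfb : f x i <;>
          simp only [signedArc, hb, hfb, posArc, negArc,
            Bool.not_false, Bool.not_true, if_true, if_false, BEq.beq] <;>
          refine ⟨y, ?_, ?_⟩ <;>
          simp_all [Bool.not_eq_true]
      · have hmem : j₀ ∈ Finset.univ.filter (fun j => x j ≠ y j) := by simp [hj₀]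
        have hsub : (Finset.univ.filter (fun j => x j ≠ y' j)) ⊆
            (Finset.univ.filter (fun j => x j ≠ y j)).erase j₀ := by
          intro j hj
          simp only [Finset.mem_filter, Finset.mem_univ, true_and] at hj
          have hne0 : j ≠ j₀ := by
            intro h; subst h; apply hj; simp [hy']
          refine Finset.mem_erase.mpr ⟨hne0, ?_⟩
          simp only [Finset.mem_filter, Finset.mem_univ, true_and]
          rwa [hy', Function.update_of_ne hne0] at hj
        have hcard : (Finset.univ.filter (fun j => x j ≠ y' j)).card ≤ m := by
          have := Finset.card_le_card hsub
          rw [Finset.card_erase_of_mem hmem] at this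
          omega
        obtain ⟨j, hj, harc⟩ := ih x y' hcard h'
        have hne0 : j ≠ j₀ := by
          intro h; subst h; apply hj; simp [hy']
        refine ⟨j, ?_, harc⟩
        rwa [hy', Function.update_of_ne hne0] at hj

lemma fix_agree {n : ℕ} (f : BState n → BState n) (I : Finset (Fin n))
    (hI : ∀ C : SignedCycle f, C.Positive → ∃ k, C.vert k ∈ I)
    (x y : BState n) (hx : f x = x) (hy : f y = y)
    (hagree : ∀ i ∈ I, x i = y i) : x = y := by
  by_contra hxy
  -- choice function
  have key : ∀ i, x i ≠ y i → ∃ j, x j ≠ y j ∧ signedArc f (x j == x i) j i := by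
    intro i hi
    have hne : f x i ≠ f y i := by rw [hx, hy]; exact hi
    obtain ⟨j, hj, harc⟩ := meanValue f i _ x y le_rfl hne
    rw [hx] at harc
    exact ⟨j, hj, harc⟩
  classical
  let g : Fin n → Fin n := fun i => if h : x i ≠ y i then (key i h).choose else i
  have hg1 : ∀ i, x i ≠ y i → x (g i) ≠ y (g i) := by
    intro i hi
    simp only [g, dif_pos hi]
    exact (key i hi).choose_spec.1
  have hg2 : ∀ i, x i ≠ y i → signedArc f (x (g i) == x i) (g i) i := by
    intro i hi
    simp only [g, dif_pos hi]
    exact (key i hi).choose_spec.2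
  obtain ⟨i₀, hi₀⟩ := Function.ne_iff.mp hxy
  have hiter : ∀ t, x (g^[t] i₀) ≠ y (g^[t] i₀) := by
    intro t
    induction t with
    | zero => exact hi₀
    | succ t iht => rw [Function.iterate_succ_apply']; exact hg1 _ iht
  -- g^[·] i₀ is not injective over ℕ
  obtain ⟨a, b, hab, heq⟩ :=
    Finite.exists_ne_map_eq_of_infinite (fun t : ℕ => g^[t] i₀)
  wlog hlt : a < b generalizing a b
  · exact this b a hab.symm heq.symm (by omega)
  set v := g^[a] i₀ with hv
  have hper : Function.IsPeriodicPt g (b - a) v := by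
    show g^[b - a] v = v
    rw [hv, ← Function.iterate_add_apply]
    have : b - a + a = b := by omega
    rw [this]
    exact heq.symm
  have hmp : 0 < Function.minimalPeriod g v :=
    hper.minimalPeriod_pos (by omega)
  set M := Function.minimalPeriod g v with hM
  -- all iterates of v are in D
  have hvD : ∀ t, x (g^[t] v) ≠ y (g^[t] v) := by
    intro t
    rw [hv, ← Function.iterate_add_apply]
    exact hiter _
  -- build the cycle
  obtain ⟨L, hL⟩ : ∃ L, M = L + 1 := ⟨M - 1, by omega⟩
  have hvert_lt : ∀ k : Fin (L + 1), L - k.val < M := by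
    intro k; omega
  let vert : Fin (L + 1) → Fin n := fun k => g^[L - k.val] v
  have hinj : Function.Injective vert := by
    intro k k' hkk
    have := Function.iterate_injOn_Iio_minimalPeriod
      (Set.mem_Iio.mpr (show L - k.val < M from by omega))
      (Set.mem_Iio.mpr (show L - k'.val < M from by omega)) hkk
    have hk := k.isLt
    have hk' := k'.isLt
    exact Fin.ext (by omega)
  have hvertD : ∀ k : Fin (L + 1), x (vert k) ≠ y (vert k) := fun k => hvD _
  have hstep : ∀ k : Fin (L + 1), vert k = g (vert (k + 1)) := by
    intro k
    by_cases hlast : k = Fin.last L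
    · have h1 : (k + 1).val = 0 := by rw [hlast, Fin.last_add_one]; rfl
      have h0 : k.val = L := by rw [hlast]; rfl
      simp only [vert, h1, h0, Nat.sub_self, Nat.sub_zero]
      show g^[0] v = g (g^[L] v)
      simp only [Function.iterate_zero_apply]
      rw [← Function.iterate_succ_apply' g L v]
      have hMv : g^[M] v = v := Function.iterate_minimalPeriod
      rw [hL] at hMv
      exact hMv.symm
    · have hk : k.val < L := by
        have := k.isLt
        rcases Nat.lt_or_ge k.val L with h | h
        · exact h
        · exact absurd (Fin.ext (by omega : k.val = L)) hlast
      have h1 : (k + 1).val = k.val + 1 := Fin.val_add_one_of_lt (by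
        rw [Fin.lt_iff_val_lt_val]; exact hk)
      simp only [vert, h1]
      rw [← Function.iterate_succ_apply' g (L - (k.val + 1)) v]
      congr 1
      omega
  -- the cycle
  let C : SignedCycle f :=
    { len := L
      vert := vert
      inj := hinj
      sign := fun k => x (vert k) == x (vert (k + 1))
      arcs := by
        intro k
        have h := hg2 (vert (k + 1)) (hvertD (k + 1))
        rw [← hstep k] at h
        exact h }
  -- C is positive
  have hpos : C.Positive := by
    have hprod : ∏ k : Fin (L + 1), (if C.sign k = false then (-1 : ℤ) else 1) = 1 := by
      have heach : ∀ k : Fin (L + 1),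
          (if C.sign k = false then (-1 : ℤ) else 1) =
          (if x (vert k) then (1 : ℤ) else -1) * (if x (vert (k + 1)) then (1 : ℤ) else -1) := by
        intro k
        show (if (x (vert k) == x (vert (k + 1))) = false then (-1 : ℤ) else 1) = _
        cases hb : x (vert k) <;> cases hb' : x (vert (k + 1)) <;> simp
      rw [Finset.prod_congr rfl (fun k _ => heach k), Finset.prod_mul_distrib]
      have hre : ∏ k : Fin (L + 1), (if x (vert (k + 1)) then (1 : ℤ) else -1)
          = ∏ k : Fin (L + 1), (if x (vert k) then (1 : ℤ) else -1) :=
        Fintype.prod_equiv (Equiv.addRight (1 : Fin (L + 1))) _ _ (fun k => rfl)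
      rw [hre, ← Finset.prod_mul_distrib]
      apply Finset.prod_eq_one
      intro k _
      cases hb : x (vert k) <;> simp
    have hsplit : ∏ k : Fin (L + 1), (if C.sign k = false then (-1 : ℤ) else 1)
        = (-1 : ℤ) ^ (Finset.univ.filter (fun k => C.sign k = false)).card := by
      rw [← Finset.prod_filter_mul_prod_filter_not Finset.univ (fun k => C.sign k = false)]
      have e1 : ∏ k ∈ Finset.univ.filter (fun k => C.sign k = false),
          (if C.sign k = false then (-1 : ℤ) else 1)
          = (-1 : ℤ) ^ (Finset.univ.filter (fun k => C.sign k = false)).card := by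
        rw [Finset.prod_congr rfl (fun k hk => ?_), Finset.prod_const]
        simp only [Finset.mem_filter] at hk
        rw [if_pos hk.2]
      have e2 : ∏ k ∈ Finset.univ.filter (fun k => ¬ C.sign k = false),
          (if C.sign k = false then (-1 : ℤ) else 1) = 1 := by
        apply Finset.prod_eq_one
        intro k hk
        simp only [Finset.mem_filter] at hk
        rw [if_neg hk.2]
      rw [e1, e2, mul_one]
    rw [hsplit] at hprod
    exact (neg_one_pow_eq_one_iff_even (by norm_num : (-1 : ℤ) ≠ 1)).mp hprod
  obtain ⟨k, hk⟩ := hI C hpos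
  exact hvertD k (hagree _ hk)


/-- Positive feedback bound: if `I` meets every positive cycle of `G(f)`,
then `f` has at most `2 ^ |I|` fixed points. -/
theorem stmt2 {n : ℕ} (f : BState n → BState n) (I : Finset (Fin n))
    (hI : ∀ C : SignedCycle f, C.Positive → ∃ k, C.vert k ∈ I) :
    (Finset.univ.filter (fun x : BState n => f x = x)).card ≤ 2 ^ I.card := by
  classical
  have hinj : Set.InjOn (fun (x : BState n) (i : {i // i ∈ I}) => x i.val)
      ↑(Finset.univ.filter (fun x : BState n => f x = x)) := by
    intro x hx y hy h
    simp only [Finset.coe_filter, Set.mem_setOf_eq, Finset.mem_univ, true_and] at hx hy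
    refine fix_agree f I hI x y hx hy ?_
    intro i hi
    exact congrFun h ⟨i, hi⟩
  have hle := Finset.card_le_card_of_injOn
    (fun (x : BState n) (i : {i // i ∈ I}) => x i.val)
    (fun _ _ => Finset.mem_univ _) hinj
  calc (Finset.univ.filter (fun x : BState n => f x = x)).card
      ≤ (Finset.univ : Finset ({i // i ∈ I} → Bool)).card := hle
    _ = 2 ^ I.card := by
        rw [Finset.card_univ, Fintype.card_fun, Fintype.card_bool, Fintype.card_coe]
end

section
/- If every positive cycle of G(f) has length at least d, then the number of fixed points of f : {0,1}^n → {0,1}^n is at most A(n,d), the maximum size of a binary code of length n with minimum Hamming distance d. -/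
open Classical in
/-- `A n d`: maximum size of a binary code of length `n` with minimum Hamming
distance `d`. -/
noncomputable def codeA (n d : ℕ) : ℕ :=
  Finset.univ.sup (fun X : Finset (BState n) =>
    if ∀ x ∈ X, ∀ y ∈ X, x ≠ y → d ≤ hammingDist x y then X.card else 0)

lemma flip_find {n : ℕ} (g : BState n → Bool) :
    ∀ (D : ℕ) (a b : BState n), hammingDist a b ≤ D → g a ≠ g b →
      ∃ j z, a j ≠ b j ∧ g (Function.update z j (a j)) = g a ∧
        g (Function.update z j (b j)) = g b := by
  intro D
  induction D with
  | zero =>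
    intro a b hD hg
    have : a = b := hammingDist_eq_zero.mp (Nat.le_zero.mp hD)
    exact absurd (congrArg g this) hg
  | succ D ih =>
    intro a b hD hg
    have hab : a ≠ b := fun h => hg (congrArg g h)
    obtain ⟨j0, hj0⟩ : ∃ j, a j ≠ b j := Function.ne_iff.mp hab
    set a' := Function.update a j0 (b j0) with ha'
    by_cases hga : g a' = g a
    · have hsub : (Finset.univ.filter fun i => a' i ≠ b i) ⊂
          (Finset.univ.filter fun i => a i ≠ b i) := by
        constructor
        · intro i hi
          simp only [Finset.mem_filter, Finset.mem_univ, true_and] at hi ⊢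
          by_cases hij : i = j0
          · subst hij; simp [ha'] at hi
          · simpa [ha', Function.update_of_ne hij] using hi
        · intro hcon
          have := hcon (by simp [hj0] : j0 ∈ Finset.univ.filter fun i => a i ≠ b i)
          simp [ha'] at this
      have hlt : hammingDist a' b < hammingDist a b := Finset.card_lt_card hsub
      obtain ⟨j, z, hjb, h1, h2⟩ := ih a' b (by omega) (hga ▸ hg)
      have hjj0 : j ≠ j0 := by
        intro h; subst h; apply hjb; simp [ha']
      refine ⟨j, z, ?_, ?_, ?_⟩
      · simpa [ha', Function.update_of_ne hjj0] using hjb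
      · rw [← hga]
        rw [show a j = a' j by simp [ha', Function.update_of_ne hjj0]]
        exact h1
      · exact h2
    · refine ⟨j0, a, hj0, ?_, ?_⟩
      · simp
      · have h2 : g a' = g b := by
          cases hb : g b <;> cases hA : g a <;> simp_all
        exact h2

lemma step_arc {n : ℕ} (f : BState n → BState n) (x y : BState n)
    (hx : f x = x) (hy : f y = y) (i : Fin n) (hi : x i ≠ y i) :
    ∃ j, x j ≠ y j ∧ signedArc f (x j == x i) j i := by
  have hg : (fun w => f w i) x ≠ (fun w => f w i) y := by
    simp only [hx, hy]; exact hi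
  obtain ⟨j, z, hjb, h1, h2⟩ :=
    flip_find (fun w => f w i) (hammingDist x y) x y le_rfl hg
  simp only [hx, hy] at h1 h2
  refine ⟨j, hjb, ?_⟩
  have hyj : y j = !x j := by cases hxj : x j <;> simp_all
  have hyi : y i = !x i := by cases hxi : x i <;> simp_all
  rw [hyj] at h2; rw [hyi] at h2
  cases hxj : x j <;> cases hxi : x i <;>
    simp_all [signedArc, posArc, negArc] <;> first | exact ⟨z, h1, h2⟩ | exact ⟨z, h2, h1⟩

lemma key {n : ℕ} (f : BState n → BState n) (x y : BState n)
    (hx : f x = x) (hy : f y = y) (hxy : x ≠ y) :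
    ∃ C : SignedCycle f, C.Positive ∧ C.length ≤ hammingDist x y := by
  classical
  have hstep : ∀ i : Fin n, ∃ j, x i ≠ y i →
      (x j ≠ y j ∧ signedArc f (x j == x i) j i) := by
    intro i
    by_cases hi : x i ≠ y i
    · obtain ⟨j, hj⟩ := step_arc f x y hx hy i hi
      exact ⟨j, fun _ => hj⟩
    · exact ⟨i, fun h' => absurd h' hi⟩
  choose u hu using hstep
  obtain ⟨i0, hi0⟩ : ∃ i, x i ≠ y i := Function.ne_iff.mp hxy
  -- all iterates stay in the disagreement set
  have horb : ∀ t : ℕ, x (u^[t] i0) ≠ y (u^[t] i0) := by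
    intro t
    induction t with
    | zero => simpa using hi0
    | succ t ih =>
      rw [Function.iterate_succ_apply']
      exact (hu _ ih).1
  -- find a repetition
  obtain ⟨p, q, hpq, heq⟩ : ∃ p q : ℕ, p ≠ q ∧ u^[p] i0 = u^[q] i0 := by
    obtain ⟨p, q, hpq, heq⟩ := Finite.exists_ne_map_eq_of_infinite (fun t : ℕ => u^[t] i0)
    exact ⟨p, q, hpq, heq⟩
  wlog hlt : p < q generalizing p q
  · exact this q p hpq.symm heq.symm (by omega)
  set a := u^[p] i0 with ha
  have hper : u^[q - p] a = a := by
    rw [ha, ← Function.iterate_add_apply]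
    rw [show q - p + p = q by omega]
    exact heq.symm
  -- minimal period
  have hex : ∃ m, 0 < m ∧ u^[m] a = a := ⟨q - p, by omega, hper⟩
  set M := Nat.find hex with hM
  obtain ⟨hMpos, hMa⟩ : 0 < M ∧ u^[M] a = a := Nat.find_spec hex
  have horba : ∀ t : ℕ, x (u^[t] a) ≠ y (u^[t] a) := by
    intro t; rw [ha, ← Function.iterate_add_apply]; exact horb _
  have hdist : ∀ s t : ℕ, s < t → t < M → u^[s] a ≠ u^[t] a := by
    intro s t hst htM hcon
    have h1 : u^[M - t + s] a = a := by
      have : u^[M - t + t] a = a := by rw [show M - t + t = M by omega]; exact hMa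
      calc u^[M - t + s] a = u^[M - t] (u^[s] a) := Function.iterate_add_apply u _ _ a
        _ = u^[M - t] (u^[t] a) := by rw [hcon]
        _ = u^[M - t + t] a := (Function.iterate_add_apply u _ _ a).symm
        _ = a := this
    have := Nat.find_min hex (m := M - t + s) (by omega)
    exact this ⟨by omega, h1⟩
  -- build the cycle
  have hM1 : M - 1 + 1 = M := by omega
  let vert : Fin (M - 1 + 1) → Fin n := fun k => u^[M - 1 - k.val] a
  have hvsucc : ∀ k : Fin (M - 1 + 1), u (vert (k + 1)) = vert k := by
    intro k
    have hkv : k.val < M := by have := k.isLt; omega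
    have hadd : ((k + 1 : Fin (M - 1 + 1))).val = (k.val + 1) % M := by
      simp [Fin.add_def, hM1]
    by_cases hk : k.val < M - 1
    · have : ((k + 1 : Fin (M - 1 + 1))).val = k.val + 1 := by
        rw [hadd, Nat.mod_eq_of_lt (by omega)]
      show u (u^[M - 1 - (k+1:Fin (M-1+1)).val] a) = u^[M - 1 - k.val] a
      rw [this, ← Function.iterate_succ_apply' u]
      congr 1
      omega
    · have hkM : k.val = M - 1 := by omega
      have : ((k + 1 : Fin (M - 1 + 1))).val = 0 := by
        rw [hadd, hkM, hM1, Nat.mod_self]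
      show u (u^[M - 1 - (k+1:Fin (M-1+1)).val] a) = u^[M - 1 - k.val] a
      rw [this, hkM]
      simp only [Nat.sub_zero, Nat.sub_self, Function.iterate_zero_apply]
      rw [← Function.iterate_succ_apply' u, show (M-1).succ = M by omega]
      exact hMa
  have hverI : ∀ k, x (vert k) ≠ y (vert k) := fun k => horba _
  let C : SignedCycle f :=
    { len := M - 1
      vert := vert
      inj := by
        intro k k' hkk
        have h1 : M - 1 - k.val < M := by omega
        have h2 : M - 1 - k'.val < M := by omega
        have : M - 1 - k.val = M - 1 - k'.val := by
          by_contra hne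
          rcases Nat.lt_or_ge (M - 1 - k.val) (M - 1 - k'.val) with hlt2 | hge
          · exact hdist _ _ hlt2 h2 hkk
          · exact hdist _ _ (by omega) h1 hkk.symm
        have hk := k.isLt; have hk' := k'.isLt
        exact Fin.ext (by omega)
      sign := fun k => x (vert k) == x (vert (k + 1))
      arcs := by
        intro k
        have := (hu (vert (k + 1)) (hverI (k + 1))).2
        rwa [hvsucc k] at this }
  refine ⟨C, ?_, ?_⟩
  · -- positivity
    show Even (Finset.univ.filter (fun k => C.sign k = false)).card
    have hcast : ((Finset.univ.filter (fun k => C.sign k = false)).card : ZMod 2) = 0 := by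
      rw [Finset.card_filter, Nat.cast_sum]
      have hterm : ∀ k : Fin (M - 1 + 1),
          ((if C.sign k = false then 1 else 0 : ℕ) : ZMod 2) =
            (if x (vert k) then 1 else 0) + (if x (vert (k+1)) then 1 else 0) := by
        intro k
        show ((if (x (vert k) == x (vert (k+1))) = false then 1 else 0 : ℕ) : ZMod 2) = _
        cases h1 : x (vert k) <;> cases h2 : x (vert (k+1)) <;> simp <;> decide
      rw [Finset.sum_congr rfl (fun k _ => hterm k), Finset.sum_add_distrib]
      have hbij : ∑ k : Fin (M-1+1), (if x (vert (k+1)) then (1:ZMod 2) else 0) =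
          ∑ k : Fin (M-1+1), (if x (vert k) then (1:ZMod 2) else 0) :=
        Fintype.sum_equiv (Equiv.addRight (1 : Fin (M-1+1))) _ _ (fun k => rfl)
      rw [hbij, ← two_mul, show (2 : ZMod 2) = 0 from rfl, zero_mul]
    rw [ZMod.natCast_eq_zero_iff] at hcast
    exact even_iff_two_dvd.mpr hcast
  · -- length bound
    show M - 1 + 1 ≤ hammingDist x y
    rw [hM1]
    have : Finset.univ.image vert ⊆ Finset.univ.filter (fun i => x i ≠ y i) := by
      intro i hi
      simp only [Finset.mem_image, Finset.mem_univ, true_and] at hi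
      obtain ⟨k, rfl⟩ := hi
      simp [hverI k]
    calc M = (Finset.univ : Finset (Fin (M-1+1))).card := by simp [hM1]
      _ = (Finset.univ.image vert).card := (Finset.card_image_of_injective _ C.inj).symm
      _ ≤ (Finset.univ.filter (fun i => x i ≠ y i)).card := Finset.card_le_card this
      _ = hammingDist x y := rfl

/-- Coding bound: if every positive cycle of `G(f)` has length at least `d`,
then `f` has at most `A(n,d)` fixed points. -/
theorem stmt3 {n : ℕ} (f : BState n → BState n) (d : ℕ)
    (h : ∀ C : SignedCycle f, C.Positive → d ≤ C.length) :
    (Finset.univ.filter (fun x : BState n => f x = x)).card ≤ codeA n d := by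
  classical
  set F := Finset.univ.filter (fun x : BState n => f x = x) with hF
  have hcond : ∀ x ∈ F, ∀ y ∈ F, x ≠ y → d ≤ hammingDist x y := by
    intro x hxF y hyF hxy
    have hx : f x = x := (Finset.mem_filter.mp hxF).2
    have hy : f y = y := (Finset.mem_filter.mp hyF).2
    obtain ⟨C, hpos, hlen⟩ := key f x y hx hy hxy
    exact le_trans (h C hpos) hlen
  have : F.card = (if ∀ x ∈ F, ∀ y ∈ F, x ≠ y → d ≤ hammingDist x y
      then F.card else 0) := (if_pos hcond).symm
  rw [this]
  exact Finset.le_sup (f := fun X : Finset (BState n) =>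
    if ∀ x ∈ X, ∀ y ∈ X, x ≠ y → d ≤ hammingDist x y then X.card else 0)
    (Finset.mem_univ F)
end

section
/- If a Boolean network f : {0,1}^n → {0,1}^n has a chain x^1 ≤ x^2 ≤ … ≤ x^ℓ of ℓ ≥ 2 distinct fixed points (with ≤ the componentwise partial order), then G(f) contains at least ℓ−1 pairwise vertex-disjoint positive cycles. -/
lemma findPosArc {n : ℕ} (f : BState n → BState n) (u v : BState n) (i : Fin n) :
    ∀ m (z1 z2 : BState n), (Finset.univ.filter (fun j => z1 j ≠ z2 j)).card ≤ m →
      z1 ≤ z2 → (∀ j, z1 j ≠ z2 j → u j ≠ v j) →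
      f z1 i = false → f z2 i = true →
      ∃ j, u j ≠ v j ∧ posArc f j i := by
  intro m
  induction m with
  | zero =>
    intro z1 z2 hcard _ _ h1 h2
    have : z1 = z2 := by
      funext j
      by_contra hj
      have : (j : Fin n) ∈ Finset.univ.filter (fun j => z1 j ≠ z2 j) := by
        simp [hj]
      have := Finset.card_pos.mpr ⟨j, this⟩
      omega
    rw [this, h2] at h1; exact absurd h1 (by simp)
  | succ m ih =>
    intro z1 z2 hcard hle hD h1 h2
    have hne : z1 ≠ z2 := by rintro rfl; rw [h2] at h1; exact absurd h1 (by simp)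
    obtain ⟨j, hj⟩ := Function.ne_iff.mp hne
    have hz1j : z1 j = false ∧ z2 j = true := by
      have := hle j
      revert this hj; cases z1 j <;> cases z2 j <;> simp
    set z' := Function.update z1 j true with hz'
    by_cases hfz' : f z' i = true
    · refine ⟨j, hD j hj, z1, hfz', ?_⟩
      have hupd : Function.update z1 j false = z1 := by
        rw [← hz1j.1]; exact Function.update_eq_self j z1
      rw [hupd]; exact h1
    · have hfz'f : f z' i = false := by revert hfz'; cases f z' i <;> simp
      apply ih z' z2 ?_ ?_ ?_ hfz'f h2
      · have hsub : Finset.univ.filter (fun k => z' k ≠ z2 k) ⊆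
            (Finset.univ.filter (fun k => z1 k ≠ z2 k)).erase j := by
          intro k hk
          simp only [Finset.mem_filter, Finset.mem_univ, true_and] at hk
          rcases eq_or_ne k j with rfl | hkj
          · exfalso; apply hk; simp [hz', hz1j.2]
          · simp only [Finset.mem_erase, Finset.mem_filter, Finset.mem_univ, true_and]
            refine ⟨hkj, ?_⟩
            simpa [hz', Function.update_of_ne hkj] using hk
        have h1' : j ∈ Finset.univ.filter (fun k => z1 k ≠ z2 k) := by simp [hj]
        have := Finset.card_le_card hsub
        have := Finset.card_erase_of_mem h1'
        omega
      · intro k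
        rcases eq_or_ne k j with rfl | hkj
        · simp [hz', hz1j.2]
        · simpa [hz', Function.update_of_ne hkj] using hle k
      · intro k hk
        apply hD k
        rcases eq_or_ne k j with rfl | hkj
        · exact hj
        · simpa [hz', Function.update_of_ne hkj] using hk

lemma key_s4 {n : ℕ} (f : BState n → BState n) (u v : BState n)
    (hu : f u = u) (hv : f v = v) (huv : u ≤ v) (hne : u ≠ v) :
    ∃ C : SignedCycle f, C.Positive ∧ ∀ k, u (C.vert k) ≠ v (C.vert k) := by
  classical
  have hstep : ∀ i : Fin n, u i ≠ v i → ∃ j, u j ≠ v j ∧ posArc f j i := by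
    intro i hi
    have hui : u i = false ∧ v i = true := by
      have := huv i; revert this hi; cases u i <;> cases v i <;> simp
    exact findPosArc f u v i _ u v le_rfl huv (fun j h => h)
      (by rw [hu]; exact hui.1) (by rw [hv]; exact hui.2)
  choose g hg1 hg2 using hstep
  set φ : Fin n → Fin n := fun i => if h : u i ≠ v i then g i h else i with hφ
  have hφD : ∀ i, u i ≠ v i → u (φ i) ≠ v (φ i) := by
    intro i hi; simp only [hφ, dif_pos hi]; exact hg1 i hi
  have hφarc : ∀ i, u i ≠ v i → posArc f (φ i) i := by
    intro i hi; simp only [hφ, dif_pos hi]; exact hg2 i hi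
  obtain ⟨i0, hi0⟩ := Function.ne_iff.mp hne
  have hiter : ∀ m, u (φ^[m] i0) ≠ v (φ^[m] i0) := by
    intro m; induction m with
    | zero => exact hi0
    | succ m ih => rw [Function.iterate_succ_apply']; exact hφD _ ih
  obtain ⟨a, b, hab, heq⟩ := Finite.exists_ne_map_eq_of_infinite (fun m : ℕ => φ^[m] i0)
  wlog hab' : a < b generalizing a b
  · exact this b a hab.symm heq.symm (by omega)
  set y := φ^[a] i0 with hy
  have hper : Function.IsPeriodicPt φ (b - a) y := by
    show φ^[b-a] y = y
    rw [hy, ← Function.iterate_add_apply]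
    have : b - a + a = b := by omega
    rw [this]; exact heq.symm
  set p := Function.minimalPeriod φ y with hp
  have hp0 : 0 < p := hper.minimalPeriod_pos (by omega)
  have hyp : φ^[p] y = y := Function.iterate_minimalPeriod
  have hinjp : Set.InjOn (φ^[·] y) (Set.Iio p) := Function.iterate_injOn_Iio_minimalPeriod
  have hiterY : ∀ m, u (φ^[m] y) ≠ v (φ^[m] y) := by
    intro m; rw [hy, ← Function.iterate_add_apply]; exact hiter (m + a)
  refine ⟨⟨p - 1, fun k => φ^[p - 1 - k.val] y, ?_, fun _ => true, ?_⟩, ?_, ?_⟩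
  · -- injectivity
    intro k k' h
    have hk : k.val ≤ p - 1 := Nat.lt_succ_iff.mp k.isLt
    have hk' : k'.val ≤ p - 1 := Nat.lt_succ_iff.mp k'.isLt
    have := hinjp (show p - 1 - k.val ∈ Set.Iio p by simp; omega)
      (show p - 1 - k'.val ∈ Set.Iio p by simp; omega) h
    exact Fin.ext (by omega)
  · -- arcs
    intro k
    simp only [signedArc, if_pos]
    have hk : k.val ≤ p - 1 := Nat.lt_succ_iff.mp k.isLt
    rcases Nat.lt_or_ge k.val (p - 1) with hlt | hge
    · have hk1 : (k + 1).val = k.val + 1 := by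
        refine Fin.val_add_one_of_lt ?_
        rw [Fin.lt_iff_val_lt_val]; simpa using hlt
      have := hφarc _ (hiterY (p - 1 - (k.val + 1)))
      have hm : p - 1 - (k.val + 1) + 1 = p - 1 - k.val := by omega
      have h3 : φ (φ^[p - 1 - (k.val + 1)] y) = φ^[p - 1 - (k.val + 1) + 1] y :=
        (Function.iterate_succ_apply' φ _ y).symm
      rw [hm] at h3
      rw [h3] at this
      show posArc f (φ^[p - 1 - k.val] y) (φ^[p - 1 - (k + 1).val] y)
      rw [hk1]; exact this
    · have hkval : k.val = p - 1 := by omega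
      have hklast : k = Fin.last (p - 1) := Fin.ext (by simpa using hkval)
      have hk1 : (k + 1).val = 0 := by rw [hklast]; simp
      have := hφarc _ (hiterY (p - 1))
      have hm : p - 1 + 1 = p := by omega
      have h3 : φ (φ^[p - 1] y) = φ^[p - 1 + 1] y :=
        (Function.iterate_succ_apply' φ _ y).symm
      rw [hm, hyp] at h3
      rw [h3] at this
      show posArc f (φ^[p - 1 - k.val] y) (φ^[p - 1 - (k + 1).val] y)
      rw [hk1, hkval]
      simpa using this
  · -- positive
    show Even (Finset.univ.filter (fun _ => (true : Bool) = false)).card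
    simp
  · intro k; exact hiterY _

/-- A chain of `ℓ ≥ 2` distinct fixed points forces `ℓ - 1` pairwise
vertex-disjoint positive cycles in `G(f)`. -/
theorem stmt4 {n ℓ : ℕ} (f : BState n → BState n) (hℓ : 2 ≤ ℓ)
    (x : Fin ℓ → BState n) (hmono : Monotone x) (hinj : Function.Injective x)
    (hfix : ∀ k, f (x k) = x k) :
    ∃ C : Fin (ℓ - 1) → SignedCycle f,
      (∀ a, (C a).Positive) ∧
      ∀ a b, a ≠ b → ∀ k k', (C a).vert k ≠ (C b).vert k' := by
  classical
  have hKey : ∀ a : Fin (ℓ - 1), ∃ C : SignedCycle f, C.Positive ∧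
      ∀ k, x ⟨a.val, by have := a.isLt; omega⟩ (C.vert k) ≠
        x ⟨a.val + 1, by have := a.isLt; omega⟩ (C.vert k) := by
    intro a
    have ha := a.isLt
    refine key_s4 f _ _ (hfix _) (hfix _) (hmono ?_) (fun h => ?_)
    · simp [Fin.le_def]
    · have := hinj h
      simp only [Fin.mk.injEq] at this
      omega
  choose C hpos hD using hKey
  refine ⟨C, hpos, ?_⟩
  have main : ∀ a b : Fin (ℓ - 1), a.val < b.val →
      ∀ k k', (C a).vert k ≠ (C b).vert k' := by
    intro a b hab k k' h
    have ha := a.isLt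
    have hb := b.isLt
    have h1 := hD a k
    have h2 := hD b k'
    rw [h] at h1
    set i := (C b).vert k' with hi
    have hle1 : x ⟨a.val, by omega⟩ ≤ x ⟨a.val + 1, by omega⟩ := hmono (by simp [Fin.le_def])
    have hle2 : x ⟨a.val + 1, by omega⟩ ≤ x ⟨b.val, by omega⟩ :=
      hmono (by simp [Fin.le_def]; omega)
    have hle3 : x ⟨b.val, by omega⟩ ≤ x ⟨b.val + 1, by omega⟩ := hmono (by simp [Fin.le_def])
    have e1 := hle1 i
    have e2 := hle2 i
    have e3 := hle3 i
    revert h1 h2 e1 e2 e3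
    cases x (⟨a.val, by omega⟩ : Fin ℓ) i <;>
      cases x (⟨a.val + 1, by omega⟩ : Fin ℓ) i <;>
      cases x (⟨b.val, by omega⟩ : Fin ℓ) i <;>
      cases x (⟨b.val + 1, by omega⟩ : Fin ℓ) i <;> simp
  intro a b hab k k'
  rcases lt_or_gt_of_ne (fun h : a.val = b.val => hab (Fin.ext h)) with h | h
  · exact main a b h k k'
  · exact fun he => main b a h k' k he.symm
end

section
/- If A ⊆ {0,1}^n contains no chain of size ℓ+1 (no ℓ+1 pairwise comparable elements under the componentwise order), then |A| is at most the sum of the ℓ largest binomial coefficients of order n, i.e. |A| ≤ Σ_{k=⌊(n−ℓ+1)/2⌋}^{⌊(n+ℓ−1)/2⌋} C(n,k). -/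
/-!
Removing the maximal elements of a family without chains of length `ℓ + 1` leaves a family
without chains of length `ℓ`, so the family is a union of `ℓ` antichains (Mirsky), and summing
the LYM inequality over them gives `∑_{s ∈ A} 1 / C(n, |s|) ≤ ℓ`. As layer `r` holds at most
`C(n, r)` sets, a family of given LYM weight is largest when it fills the `ℓ` largest layers,
which are the `ℓ` layers closest to `n / 2`.
-/

open Finset

namespace Nat

lemma choose_le_choose_of_le_of_le_half {n a b : ℕ} (hab : a ≤ b) (hb : b ≤ n / 2) :
    n.choose a ≤ n.choose b := by
  induction b, hab using Nat.le_induction with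
  | base => rfl
  | succ k _ ih => exact (ih (by omega)).trans (choose_le_succ_of_lt_half_left (by omega))

lemma choose_le_choose_of_abs_le {n a b : ℕ} (hb : b ≤ n)
    (h : |2 * (b : ℤ) - n| ≤ |2 * (a : ℤ) - n|) : n.choose a ≤ n.choose b := by
  rcases lt_or_ge n a with ha | ha
  · simp [choose_eq_zero_of_lt ha]
  have fold : ∀ k ≤ n, n.choose k = n.choose (min k (n - k)) := by
    intro k hk
    rcases le_total k (n - k) with hk' | hk'
    · rw [min_eq_left hk']
    · rw [min_eq_right hk', choose_symm hk]
  rw [fold a ha, fold b hb]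
  rcases abs_cases (2 * (a : ℤ) - n) with ⟨_, _⟩ | ⟨_, _⟩ <;>
    rcases abs_cases (2 * (b : ℤ) - n) with ⟨_, _⟩ | ⟨_, _⟩ <;>
    exact choose_le_choose_of_le_of_le_half (by omega) (by omega)

variable {n ℓ k : ℕ}

-- For `0 < ℓ`, the window `Icc ((n - ℓ + 1) / 2) ((n + ℓ - 1) / 2)` is
-- `{k | n - ℓ ≤ 2 * k < n + ℓ}`.
lemma choose_le_choose_of_mem_Icc (hℓ : ℓ ≤ n) (hk : k ∈ Icc ((n - ℓ + 1) / 2) ((n + ℓ - 1) / 2)) :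
    n.choose ((n - ℓ + 1) / 2) ≤ n.choose k := by
  rw [mem_Icc] at hk
  refine choose_le_choose_of_abs_le (by omega) ?_
  rcases abs_cases (2 * (k : ℤ) - n) with ⟨_, _⟩ | ⟨_, _⟩ <;>
    rcases abs_cases (2 * (((n - ℓ + 1) / 2 : ℕ) : ℤ) - n) with ⟨_, _⟩ | ⟨_, _⟩ <;> omega

lemma choose_le_choose_of_notMem_Icc (hk : k ∉ Icc ((n - ℓ + 1) / 2) ((n + ℓ - 1) / 2)) :
    n.choose k ≤ n.choose ((n - ℓ + 1) / 2) := by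
  rw [mem_Icc] at hk
  refine choose_le_choose_of_abs_le (by omega) ?_
  rcases abs_cases (2 * (k : ℤ) - n) with ⟨_, _⟩ | ⟨_, _⟩ <;>
    rcases abs_cases (2 * (((n - ℓ + 1) / 2 : ℕ) : ℤ) - n) with ⟨_, _⟩ | ⟨_, _⟩ <;> omega

end Nat

namespace Finset

section Fractional
variable {ι 𝕜 : Type*} [DecidableEq ι] [CommRing 𝕜] [LinearOrder 𝕜] [IsStrictOrderedRing 𝕜]

theorem sum_mul_le_sum_of_sum_le_card {s B : Finset ι} (hB : B ⊆ s) {c x : ι → 𝕜} {m : 𝕜}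
    (hm : 0 ≤ m) (hx₀ : ∀ i ∈ s, 0 ≤ x i) (hx₁ : ∀ i ∈ s, x i ≤ 1)
    (hcB : ∀ i ∈ B, m ≤ c i) (hcs : ∀ i ∈ s \ B, c i ≤ m) (hx : ∑ i ∈ s, x i ≤ #B) :
    ∑ i ∈ s, c i * x i ≤ ∑ i ∈ B, c i := by
  have hout : ∑ i ∈ s \ B, c i * x i ≤ ∑ i ∈ s \ B, m * x i :=
    sum_le_sum fun i hi => mul_le_mul_of_nonneg_right (hcs i hi) (hx₀ i (sdiff_subset hi))
  have hin : ∑ i ∈ B, c i * (x i - 1) ≤ ∑ i ∈ B, m * (x i - 1) :=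
    sum_le_sum fun i hi => mul_le_mul_of_nonpos_right (hcB i hi) (by linarith [hx₁ i (hB hi)])
  have hm_sum : m * (∑ i ∈ s, x i - #B) ≤ 0 := mul_nonpos_of_nonneg_of_nonpos hm (by linarith)
  rw [← sum_sdiff hB] at hx hm_sum ⊢
  simp only [mul_sub, mul_one, sum_sub_distrib, ← mul_sum, sum_const, nsmul_eq_mul] at hin hm_sum
  rw [← mul_sum] at hout
  linarith

end Fractional

section Chains
variable {α : Type*} [PartialOrder α]

theorem card_le_of_isChain_of_subset_not_maximal {s c : Finset α} {ℓ : ℕ}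
    (hs : ∀ c ⊆ s, IsChain (· ≤ ·) (c : Set α) → #c ≤ ℓ + 1)
    (hcs : c ⊆ s) (hcmax : ∀ a ∈ c, ¬Maximal (· ∈ s) a) (hc : IsChain (· ≤ ·) (c : Set α)) :
    #c ≤ ℓ := by
  obtain rfl | hne := c.eq_empty_or_nonempty
  · simp
  obtain ⟨t, htc, htmax⟩ := c.exists_maximal hne
  obtain ⟨u, htu, hus⟩ := exists_gt_of_not_maximal (hcs htc) (hcmax t htc)
  have hle : ∀ b ∈ c, b ≤ u := fun b hb =>
    ((hc.total (mem_coe.2 hb) (mem_coe.2 htc)).elim id fun h => htmax hb h).trans htu.le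
  have huc : u ∉ c := fun hu => (htmax hu htu.le).not_gt htu
  have := hs (c.cons u huc) (cons_subset.2 ⟨hus, hcs⟩)
    (by rw [coe_cons]; exact hc.insert fun b hb _ => Or.inr (hle b hb))
  rw [card_cons] at this
  omega

theorem sum_le_of_forall_isChain_card_le {M : Type*} [AddCommMonoidWithOne M] [PartialOrder M]
    [IsOrderedAddMonoid M] (w : α → M)
    (hw : ∀ t : Finset α, IsAntichain (· ≤ ·) (t : Set α) → ∑ a ∈ t, w a ≤ 1) {ℓ : ℕ} {s : Finset α}
    (hs : ∀ c ⊆ s, IsChain (· ≤ ·) (c : Set α) → #c ≤ ℓ) : ∑ a ∈ s, w a ≤ ℓ := by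
  induction ℓ generalizing s with
  | zero =>
    have : s = ∅ := eq_empty_of_forall_notMem fun a ha => by
      simpa using hs {a} (by simpa) (by simp)
    simp [this]
  | succ ℓ ih =>
    classical
    rw [← sum_filter_add_sum_filter_not s (Maximal (· ∈ s)), Nat.cast_succ, add_comm (ℓ : M)]
    refine add_le_add (hw _ ?_) (ih fun c hcs hc => card_le_of_isChain_of_subset_not_maximal hs
      (hcs.trans (filter_subset _ _)) (fun a ha => (mem_filter.1 (hcs ha)).2) hc)
    simpa using (setOfPred_maximal_antichain (· ∈ s)).subset fun a ha => (mem_filter.1 ha).2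

end Chains

section Layers
variable {α : Type*} [Fintype α]

theorem card_le_sum_choose_of_sum_inv_choose_le {𝒜 : Finset (Finset α)} {ℓ : ℕ}
    (h𝒜 : ∑ s ∈ 𝒜, ((Fintype.card α).choose #s : ℚ)⁻¹ ≤ ℓ) :
    #𝒜 ≤ ∑ k ∈ Icc ((Fintype.card α - ℓ + 1) / 2) ((Fintype.card α + ℓ - 1) / 2),
      (Fintype.card α).choose k := by
  set N := Fintype.card α
  set lo := (N - ℓ + 1) / 2
  set hi := (N + ℓ - 1) / 2
  rcases lt_or_ge N ℓ with hℓ | hℓ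
  · calc #𝒜 ≤ 2 ^ N := by simpa [N] using card_le_univ 𝒜
      _ = ∑ k ∈ range (N + 1), N.choose k := (Nat.sum_range_choose N).symm
      _ ≤ ∑ k ∈ Icc lo hi, N.choose k :=
        sum_le_sum_of_subset fun k hk => by simp only [mem_range, mem_Icc] at hk ⊢; omega
  have hchoose_pos : ∀ r ∈ range (N + 1), (0 : ℚ) < N.choose r := fun r hr =>
    Nat.cast_pos.2 (Nat.choose_pos (by simpa [Nat.lt_succ_iff] using hr))
  have hslice : ∀ r ∈ range (N + 1), (N.choose r : ℚ) * (#(𝒜 # r) / N.choose r) = #(𝒜 # r) :=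
    fun r hr => mul_div_cancel₀ _ (hchoose_pos r hr).ne'
  have hcard : (#𝒜 : ℚ) = ∑ r ∈ range (N + 1), (N.choose r : ℚ) * (#(𝒜 # r) / N.choose r) := by
    rw [sum_congr rfl hslice, Nat.range_succ_eq_Iic]
    exact_mod_cast (sum_card_slice 𝒜).symm
  have hlym : ∑ r ∈ range (N + 1), (#(𝒜 # r) / N.choose r : ℚ) ≤ #(Icc lo hi) := calc
    _ = ∑ r ∈ range (N + 1), ∑ s ∈ 𝒜 with #s = r, (N.choose r : ℚ)⁻¹ := by
      simp [slice, div_eq_mul_inv]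
    _ = ∑ s ∈ 𝒜, (N.choose #s : ℚ)⁻¹ :=
      sum_fiberwise_of_maps_to' (fun s _ => mem_range.2 (Nat.lt_succ_of_le (card_le_univ s))) _
    _ ≤ ℓ := h𝒜
    _ ≤ #(Icc lo hi) := by rw [Nat.card_Icc]; exact_mod_cast (by omega)
  have key := sum_mul_le_sum_of_sum_le_card (s := range (N + 1)) (B := Icc lo hi)
    (fun k hk => by simp only [mem_range, mem_Icc] at hk ⊢; omega)
    (c := fun r => (N.choose r : ℚ)) (x := fun r => #(𝒜 # r) / N.choose r) (m := N.choose lo)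
    (by positivity) (fun r _ => by positivity)
    (fun r hr => div_le_one_of_le₀ (by exact_mod_cast sized_slice.card_le) (hchoose_pos r hr).le)
    (fun j hj => by exact_mod_cast Nat.choose_le_choose_of_mem_Icc hℓ hj)
    (fun r hr => by exact_mod_cast Nat.choose_le_choose_of_notMem_Icc (mem_sdiff.1 hr).2)
    hlym
  exact_mod_cast hcard.trans_le key

end Layers

end Finset

def boolFunOrderEmbedding (ι : Type*) [Fintype ι] : (ι → Bool) ↪o Finset ι :=
  OrderEmbedding.ofMapLEIff (fun x => univ.filter fun i => x i) fun x y => by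
    simp [subset_iff, Pi.le_def, Bool.le_iff_imp]

/-- Erdős' theorem: a subset of `{0,1}^n` with no chain of size `ℓ + 1` has
cardinality at most the sum of the `ℓ` largest binomial coefficients of order `n`. -/
theorem stmt6 {n ℓ : ℕ} (A : Finset (BState n))
    (h : ¬ ∃ c : Finset (BState n), c ⊆ A ∧ c.card = ℓ + 1 ∧
      ∀ x ∈ c, ∀ y ∈ c, x ≤ y ∨ y ≤ x) :
    A.card ≤ ∑ k ∈ Finset.Icc ((n - ℓ + 1) / 2) ((n + ℓ - 1) / 2), n.choose k := by
  have hchain : ∀ c ⊆ A, IsChain (· ≤ ·) (c : Set (BState n)) → #c ≤ ℓ := by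
    intro c hcA hc
    by_contra! hlt
    obtain ⟨d, hdc, hd⟩ := exists_subset_card_eq hlt
    exact h ⟨d, hdc.trans hcA, hd, fun x hx y hy => (hc.mono (coe_subset.2 hdc)).total hx hy⟩
  set e := boolFunOrderEmbedding (Fin n)
  have hlym : ∑ s ∈ A.map e.toEmbedding, ((Fintype.card (Fin n)).choose #s : ℚ)⁻¹ ≤ ℓ := by
    rw [sum_map]
    refine sum_le_of_forall_isChain_card_le _ (fun t ht => ?_) hchain
    simpa [sum_map] using lubell_yamamoto_meshalkin_inequality_sum_inv_choose (𝕜 := ℚ)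
      (𝒜 := t.map e.toEmbedding) (by simpa using ht.image_embedding e)
  simpa using card_le_sum_choose_of_sum_inv_choose_le hlym
end

section
/- Every antichain in {0,1}^n (set of pairwise incomparable elements under the componentwise order) has size at most C(n, ⌊n/2⌋). -/
/-!
Identify `x : α → Bool` with the finset of coordinates where it is `true`. This is an order
embedding of the componentwise order into inclusion, so it carries antichains of `α → Bool`
to antichains of `Finset α`, where Sperner's theorem (via the LYM inequality) applies.
-/

open Finset

namespace Pi

variable {α : Type*} [Fintype α]

def trueFinset (x : α → Bool) : Finset α := univ.filter (x · = true)

@[simp]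
lemma mem_trueFinset {x : α → Bool} {i : α} : i ∈ trueFinset x ↔ x i = true := by
  simp [trueFinset]

lemma trueFinset_subset_trueFinset_iff {x y : α → Bool} :
    trueFinset x ⊆ trueFinset y ↔ x ≤ y := by
  simp only [subset_iff, mem_trueFinset, Pi.le_def, Bool.le_iff_imp]

def trueFinsetOrderEmbedding : (α → Bool) ↪o Finset α :=
  OrderEmbedding.ofMapLEIff trueFinset fun _ _ ↦ trueFinset_subset_trueFinset_iff

end Pi

theorem IsAntichain.card_le_choose_boolFun {α : Type*} [Fintype α] {A : Finset (α → Bool)}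
    (hA : IsAntichain (· ≤ ·) (A : Set (α → Bool))) :
    #A ≤ (Fintype.card α).choose (Fintype.card α / 2) := by
  classical
  have hB := hA.image_embedding Pi.trueFinsetOrderEmbedding
  rw [← coe_image] at hB
  simpa [card_image_of_injective _ Pi.trueFinsetOrderEmbedding.injective] using hB.sperner

/-- Sperner's lemma: every antichain of `{0,1}^n` has size at most `C(n, ⌊n/2⌋)`. -/
theorem stmt8 {n : ℕ} (A : Finset (BState n))
    (h : ∀ x ∈ A, ∀ y ∈ A, x ≠ y → ¬ x ≤ y ∧ ¬ y ≤ x) :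
    A.card ≤ n.choose (n / 2) := by
  have hA : IsAntichain (· ≤ ·) (A : Set (BState n)) :=
    fun x hx y hy hxy ↦ (h x hx y hy hxy).1
  simpa using hA.card_le_choose_boolFun
end

section
/- If G(f) is acyclic (contains no directed cycle), then f : {0,1}^n → {0,1}^n has exactly one fixed point. -/
lemma arc_of_ne {n : ℕ} (f : BState n → BState n) (i a : Fin n) (x : BState n)
    (hne : f (Function.update x a true) i ≠ f (Function.update x a false) i) :
    arc f a i := by
  cases ht : f (Function.update x a true) i with
  | true =>
    refine Or.inl ⟨x, ht, ?_⟩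
    cases hf : f (Function.update x a false) i
    · rfl
    · exact absurd (ht.trans hf.symm) hne
  | false =>
    refine Or.inr ⟨x, ht, ?_⟩
    cases hf : f (Function.update x a false) i
    · exact absurd (ht.trans hf.symm) hne
    · rfl

lemma dep_aux {n : ℕ} (f : BState n → BState n) (i : Fin n) :
    ∀ (s : Finset (Fin n)) (x y : BState n),
      (∀ j, x j ≠ y j → j ∈ s) → (∀ j, arc f j i → x j = y j) → f x i = f y i := by
  intro s
  induction s using Finset.induction_on with
  | empty =>
    intro x y hs _
    have hxy : x = y := funext fun j => by
      by_contra hj; exact absurd (hs j hj) (Finset.notMem_empty j)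
    rw [hxy]
  | @insert a t ha IH =>
    intro x y hs hxy
    by_cases hxa : x a = y a
    · refine IH x y (fun j hj => ?_) hxy
      rcases Finset.mem_insert.mp (hs j hj) with h | h
      · exact absurd hxa (h ▸ hj)
      · exact h
    · have harc : ¬ arc f a i := fun hh => hxa (hxy a hh)
      have hx : Function.update x a (x a) = x := Function.update_eq_self a x
      have h1 : f x i = f (Function.update x a (y a)) i := by
        by_contra hne
        apply harc
        cases hb : x a <;> cases hc : y a
        · exact absurd (hb.trans hc.symm) hxa
        · rw [hb] at hx
          rw [hc] at hne
          refine arc_of_ne f i a x ?_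
          rw [hx]
          exact fun hh => hne hh.symm
        · rw [hb] at hx
          rw [hc] at hne
          refine arc_of_ne f i a x ?_
          rw [hx]
          exact hne
        · exact absurd (hb.trans hc.symm) hxa
      rw [h1]
      refine IH (Function.update x a (y a)) y (fun j hj => ?_) (fun j hj => ?_)
      · by_cases hja : j = a
        · subst hja
          rw [Function.update_self] at hj
          exact absurd rfl hj
        · rw [Function.update_of_ne hja] at hj
          rcases Finset.mem_insert.mp (hs j hj) with h | h
          · exact absurd h hja
          · exact h
      · by_cases hja : j = a
        · subst hja; rw [Function.update_self]
        · rw [Function.update_of_ne hja]; exact hxy j hj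

lemma dep {n : ℕ} (f : BState n → BState n) (i : Fin n) (x y : BState n)
    (hxy : ∀ j, arc f j i → x j = y j) : f x i = f y i :=
  dep_aux f i Finset.univ x y (fun j _ => Finset.mem_univ j) hxy

lemma walk_to_cycle {n : ℕ} (f : BState n → BState n) :
    ∀ L, 1 ≤ L → ∀ p : ℕ → Fin n, p L = p 0 →
      (∀ k < L, arc f (p k) (p (k + 1))) → Nonempty (UCycle f) := by
  intro L
  induction L using Nat.strong_induction_on with
  | _ L IH =>
    intro hL p hclose harcs
    by_cases hinj : ∀ a b, a < L → b < L → p a = p b → a = b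
    · obtain ⟨m, rfl⟩ : ∃ m, L = m + 1 := ⟨L - 1, (Nat.succ_pred_eq_of_pos hL).symm⟩
      refine ⟨⟨m, fun k => p k.val, ?_, ?_⟩⟩
      · intro a b hab
        exact Fin.ext (hinj a.val b.val a.isLt b.isLt hab)
      · intro k
        rcases eq_or_ne k (Fin.last m) with hk | hk
        · have h0 : ((k + 1 : Fin (m + 1)) : ℕ) = 0 := by
            rw [Fin.val_add_one]
            simp [hk]
          show arc f (p k.val) (p ((k + 1 : Fin (m + 1)) : ℕ))
          rw [h0, hk, Fin.val_last, ← hclose]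
          exact harcs m (Nat.lt_succ_self m)
        · have h0 : ((k + 1 : Fin (m + 1)) : ℕ) = k.val + 1 := by
            rw [Fin.val_add_one]
            simp [hk]
          show arc f (p k.val) (p ((k + 1 : Fin (m + 1)) : ℕ))
          rw [h0]
          exact harcs k.val k.isLt
    · push_neg at hinj
      obtain ⟨a, b, ha, hb, hab, hne⟩ := hinj
      have key : ∀ a b : ℕ, a < b → b < L → p a = p b → Nonempty (UCycle f) := by
        intro a b hlt hbL hpab
        refine IH (b - a) (lt_of_le_of_lt (Nat.sub_le b a) hbL) (by omega)
          (fun k => p (a + k)) ?_ ?_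
        · have hba : a + (b - a) = b := by omega
          show p (a + (b - a)) = p (a + 0)
          rw [hba]
          exact hpab.symm
        · intro k hk
          have hkL : a + k < L := by omega
          exact harcs (a + k) hkL
      rcases hne.lt_or_gt with h1 | h1
      · exact key a b h1 hb hab
      · exact key b a h1 ha hab.symm

lemma transgen_walk {α : Type*} {r : α → α → Prop} {a b : α}
    (h : Relation.TransGen r a b) :
    ∃ L, 1 ≤ L ∧ ∃ p : ℕ → α, p 0 = a ∧ p L = b ∧ ∀ k < L, r (p k) (p (k + 1)) := by
  induction h with
  | @single b' hr =>
    exact ⟨1, le_refl 1, fun k => if k = 0 then a else b', by simp, by simp, by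
      intro k hk
      interval_cases k
      simpa using hr⟩
  | @tail b c hab hbc IH =>
    obtain ⟨L, hL, p, hp0, hpL, hps⟩ := IH
    refine ⟨L + 1, by omega, fun k => if k ≤ L then p k else c, by simp [hp0], by simp, ?_⟩
    intro k hk
    rcases Nat.lt_or_ge k L with h1 | h1
    · have e1 : k ≤ L := le_of_lt h1
      have e2 : k + 1 ≤ L := h1
      simp only [if_pos e1, if_pos e2]
      exact hps k h1
    · have e1 : k = L := by omega
      subst e1
      simp only [le_refl, if_pos, Nat.lt_irrefl]
      rw [if_neg (by omega), hpL]
      exact hbc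

/-- Robert's theorem (part 1): if `G(f)` is acyclic then `f` has a unique
fixed point. -/
theorem stmt9 {n : ℕ} (f : BState n → BState n) (h : IsEmpty (UCycle f)) :
    ∃! x : BState n, f x = x := by
  classical
  have hirr : ∀ i : Fin n, ¬ Relation.TransGen (fun j i => arc f j i) i i := by
    intro i hi
    obtain ⟨L, hL, p, hp0, hpL, hps⟩ := transgen_walk hi
    exact h.false (walk_to_cycle f L hL p (by rw [hp0, hpL]) hps).some
  have hwf : WellFounded (fun j i : Fin n => arc f j i) := by
    have h2 : WellFounded (Relation.TransGen fun j i : Fin n => arc f j i) := by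
      have : IsIrrefl (Fin n) (Relation.TransGen fun j i => arc f j i) := ⟨hirr⟩
      exact Finite.wellFounded_of_trans_of_irrefl _
    exact Subrelation.wf (fun hh => Relation.TransGen.single hh) h2
  let F : ∀ i : Fin n, (∀ j : Fin n, arc f j i → Bool) → Bool :=
    fun i rec => f (fun j => if hj : arc f j i then rec j hj else false) i
  let z : BState n := fun i => hwf.fix F i
  have hz : ∀ i, z i = f z i := by
    intro i
    have h1 : z i = F i (fun j _ => z j) := hwf.fix_eq F i
    rw [h1]
    exact dep f i _ z (fun j hj => by simp only [dif_pos hj])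
  have hfz : f z = z := funext fun i => (hz i).symm
  refine ⟨z, hfz, ?_⟩
  intro y hy
  funext i
  refine hwf.induction (C := fun i => y i = z i) i ?_
  intro i IH
  calc y i = f y i := by rw [hy]
    _ = f z i := dep f i y z (fun j hj => IH j hj)
    _ = z i := (hz i).symm
end

section
/- If G(f) is acyclic, then the synchronous iteration converges in at most n steps: for every state y, f^n(y) is the unique fixed point of f. Equivalently, the synchronous graph Σ(f) has a path of length at most n from every state to the fixed point. -/
section Aux

variable {n : ℕ}

lemma not_arc_indep (f : BState n → BState n) {j i : Fin n}
    (hna : ¬ arc f j i) (x : BState n) (b : Bool) :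
    f (Function.update x j b) i = f x i := by
  have key : ∀ z : BState n,
      f (Function.update z j true) i = f (Function.update z j false) i := by
    intro z
    by_contra hne
    rcases Bool.eq_false_or_eq_true (f (Function.update z j true) i) with h1 | h1 <;>
      rcases Bool.eq_false_or_eq_true (f (Function.update z j false) i) with h2 | h2 <;>
        simp [h1, h2] at hne
    · exact hna (Or.inl ⟨z, h1, h2⟩)
    · exact hna (Or.inr ⟨z, h1, h2⟩)
  have hx : x = Function.update x j (x j) := (Function.update_eq_self j x).symm
  nth_rewrite 2 [hx]
  cases b <;> rcases Bool.eq_false_or_eq_true (x j) with hxj | hxj <;> rw [hxj] <;>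
    first
      | rfl
      | exact key x
      | exact (key x).symm

lemma agree_of_deps (f : BState n → BState n) (i : Fin n) :
    ∀ s : Finset (Fin n), ∀ x y : BState n, (∀ j, j ∉ s → x j = y j) →
      (∀ j, arc f j i → x j = y j) → f x i = f y i := by
  intro s
  induction s using Finset.induction_on with
  | empty =>
    intro x y hout _
    have : x = y := funext fun j => hout j (by simp)
    rw [this]
  | @insert a s ha ih =>
    intro x y hout harc
    by_cases hxa : x a = y a
    · apply ih
      · intro j hj
        by_cases hja : j = a
        · rw [hja]; exact hxa
        · exact hout j (by simp [hja, hj])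
      · exact harc
    · have hna : ¬ arc f a i := fun hc => hxa (harc a hc)
      have h1 : f x i = f (Function.update x a (y a)) i :=
        (not_arc_indep f hna x (y a)).symm
      rw [h1]
      apply ih
      · intro j hj
        by_cases hja : j = a
        · subst hja; simp
        · rw [Function.update_of_ne hja]; exact hout j (by simp [hja, hj])
      · intro j hj
        by_cases hja : j = a
        · subst hja; simp
        · rw [Function.update_of_ne hja]; exact harc j hj

lemma exists_ucycle (f : BState n → BState n) (P : Fin n → Prop)
    (i0 : Fin n) (h0 : P i0)
    (hP : ∀ i, P i → ∃ j, P j ∧ arc f j i) : Nonempty (UCycle f) := by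
  classical
  choose g hg1 hg2 using hP
  let A : ℕ → {i : Fin n // P i} :=
    fun m => Nat.rec ⟨i0, h0⟩ (fun _ p => ⟨g p.1 p.2, hg1 p.1 p.2⟩) m
  set a : ℕ → Fin n := fun m => (A m).1 with ha
  have harc : ∀ m, arc f (a (m+1)) (a m) := fun m => hg2 (A m).1 (A m).2
  obtain ⟨m1, m2, hne, heq⟩ := Finite.exists_ne_map_eq_of_infinite a
  have hex : ∃ l, ∃ k, k < l ∧ a k = a l := by
    rcases Nat.lt_or_ge m1 m2 with hlt | hge
    · exact ⟨m2, m1, hlt, heq⟩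
    · exact ⟨m1, m2, by omega, heq.symm⟩
  set L := Nat.find hex with hL
  obtain ⟨K, hKL, hKeq⟩ := Nat.find_spec hex
  have hinj : ∀ p q, p < q → q < L → a p ≠ a q := by
    intro p q hpq hqL hpe
    exact Nat.find_min hex hqL ⟨p, hpq, hpe⟩
  refine ⟨⟨L - 1 - K, fun t => a (L - 1 - t.val), ?_, ?_⟩⟩
  · intro t t' hteq
    have ht := t.isLt
    have ht' := t'.isLt
    have hvv : L - 1 - t.val = L - 1 - t'.val := by
      by_contra hne'
      rcases Nat.lt_or_ge (L - 1 - t.val) (L - 1 - t'.val) with hlt | hge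
      · exact hinj _ _ hlt (by omega) hteq
      · exact hinj _ _ (by omega) (by omega) hteq.symm
    exact Fin.ext (by omega)
  · intro k
    have hkl := k.isLt
    by_cases hk : (k : ℕ) < L - 1 - K
    · have h1 : ((k + 1 : Fin (L - 1 - K + 1)) : ℕ) = (k : ℕ) + 1 :=
        Fin.val_add_one_of_lt (by
          rw [Fin.lt_iff_val_lt_val, Fin.val_last]; exact hk)
      have h2 : L - 1 - (k : ℕ) = (L - 1 - ((k : ℕ) + 1)) + 1 := by omega
      beta_reduce
      rw [h1, h2]
      exact harc _
    · have hk' : (k : ℕ) = L - 1 - K := by omega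
      have hklast : k = Fin.last (L - 1 - K) := Fin.ext hk'
      have h1 : ((k + 1 : Fin (L - 1 - K + 1)) : ℕ) = 0 := by
        rw [hklast, Fin.last_add_one]; rfl
      have h2 : L - 1 - (k : ℕ) = K := by omega
      beta_reduce
      rw [h1, h2, hKeq]
      have h3 : (L - 1) + 1 = L := by omega
      have := harc (L - 1)
      rw [h3] at this
      simpa using this

/-- Coordinate `i` is stabilized at time `m`: from any start, at any time `≥ m`,
its value equals its value at time `m` from any start. -/
def SStable (f : BState n → BState n) (m : ℕ) (i : Fin n) : Prop :=
  ∀ x y : BState n, ∀ k, m ≤ k → f^[k] x i = f^[m] y i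

end Aux

/-- Robert's theorem (part 2): if `G(f)` is acyclic then, for every state `y`,
`f^[n] y` is the unique fixed point of `f`. -/
theorem stmt10 {n : ℕ} (f : BState n → BState n) (h : IsEmpty (UCycle f)) :
    ∀ y : BState n, f (f^[n] y) = f^[n] y ∧ ∀ z, f z = z → z = f^[n] y := by
  classical
  have mono : ∀ m (i : Fin n), SStable f m i → SStable f (m+1) i := by
    intro m i hs x y k hk
    have h1 := hs x y k (by omega)
    have h2 := hs y y (m+1) (by omega)
    rw [h1, ← h2]
  have closure : ∀ m (i : Fin n), (∀ j, arc f j i → SStable f m j) →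
      SStable f (m+1) i := by
    intro m i hpre x y k hk
    obtain ⟨k', rfl⟩ : ∃ k', k = k' + 1 := ⟨k - 1, by omega⟩
    rw [Function.iterate_succ_apply', Function.iterate_succ_apply']
    exact agree_of_deps f i Finset.univ _ _
      (fun j hj => absurd (Finset.mem_univ j) hj)
      (fun j hj => hpre j hj x y k' (by omega))
  let A : ℕ → Finset (Fin n) := fun m => Finset.univ.filter (fun i => SStable f m i)
  have hmem : ∀ m i, i ∈ A m ↔ SStable f m i := by
    intro m i; simp [A]
  have hAmono : ∀ m, A m ⊆ A (m+1) := by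
    intro m i hi
    rw [hmem] at hi ⊢
    exact mono m i hi
  have hgrow : ∀ m, A m ≠ Finset.univ → A m ⊂ A (m+1) := by
    intro m hne
    have hsrc : ∃ i, ¬ SStable f m i ∧ ∀ j, arc f j i → SStable f m j := by
      by_contra hcon
      push_neg at hcon
      obtain ⟨i0, hi0⟩ : ∃ i, ¬ SStable f m i := by
        by_contra hall
        push_neg at hall
        exact hne (Finset.eq_univ_iff_forall.mpr fun i => (hmem m i).mpr (hall i))
      refine (exists_ucycle f (fun i => ¬ SStable f m i) i0 hi0 ?_).elim h.false
      intro i hi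
      obtain ⟨j, hj1, hj2⟩ := hcon i hi
      exact ⟨j, hj2, hj1⟩
    obtain ⟨i, hiNot, hiPre⟩ := hsrc
    rw [Finset.ssubset_iff_subset_ne]
    refine ⟨hAmono m, fun heq => hiNot ?_⟩
    have : i ∈ A m := by
      rw [heq, hmem]
      exact closure m i hiPre
    exact (hmem m i).mp this
  have hcard : ∀ m, A m = Finset.univ ∨ m ≤ (A m).card := by
    intro m
    induction m with
    | zero => right; omega
    | succ m ih =>
      by_cases he : A m = Finset.univ
      · left
        exact Finset.univ_subset_iff.mp (he ▸ hAmono m)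
      · right
        rcases ih with he' | hc
        · exact absurd he' he
        · have := Finset.card_lt_card (hgrow m he)
          omega
  have hAn : A n = Finset.univ := by
    rcases hcard n with he | hc
    · exact he
    · refine Finset.eq_univ_of_card _ ?_
      have h1 := Finset.card_le_univ (A n)
      simp only [Finset.card_univ, Fintype.card_fin] at h1 ⊢
      omega
  have hSn : ∀ i, SStable f n i := by
    intro i
    have : i ∈ A n := by rw [hAn]; exact Finset.mem_univ i
    exact (hmem n i).mp this
  intro y
  constructor
  · funext i
    have hs := hSn i y y (n+1) (by omega)
    rw [Function.iterate_succ_apply'] at hs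
    exact hs
  · intro z hz
    funext i
    have hz' : f^[n] z = z := Function.iterate_fixed hz n
    have hs := hSn i z y n le_rfl
    rw [hz'] at hs
    exact hs
end

section
/- If G(f) is acyclic, then the asynchronous graph Γ(f) is acyclic (has no directed cycle) and from every state y there is a geodesic path in Γ(f) to the unique fixed point of f (a path of length equal to the Hamming distance). -/
lemma update_of_not_arc {n : ℕ} {f : BState n → BState n} {j i : Fin n}
    (hna : ¬ arc f j i) (x : BState n) (b : Bool) :
    f (Function.update x j b) i = f x i := by
  have key : ∀ y : BState n,
      f (Function.update y j true) i = f (Function.update y j false) i := by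
    intro y
    rcases Bool.eq_false_or_eq_true (f (Function.update y j true) i) with h1 | h1 <;>
      rcases Bool.eq_false_or_eq_true (f (Function.update y j false) i) with h2 | h2
    · rw [h1, h2]
    · exact absurd (Or.inl ⟨y, h1, h2⟩) hna
    · exact absurd (Or.inr ⟨y, h1, h2⟩) hna
    · rw [h1, h2]
  have hb : ∀ b1 b2 : Bool, f (Function.update x j b1) i = f (Function.update x j b2) i := by
    intro b1 b2
    cases b1 <;> cases b2
    · rfl
    · exact (key x).symm
    · exact key x
    · rfl
  rw [hb b (x j), Function.update_eq_self]

lemma eq_of_agree_aux {n : ℕ} (f : BState n → BState n) (i : Fin n) :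
    ∀ (m : ℕ) (y z : BState n),
      (Finset.univ.filter (fun j => y j ≠ z j)).card ≤ m →
      (∀ j, y j ≠ z j → ¬ arc f j i) → f y i = f z i := by
  intro m
  induction m with
  | zero =>
    intro y z hc _
    have hyz : y = z := by
      funext j
      by_contra hj
      have hmem : j ∈ Finset.univ.filter (fun j => y j ≠ z j) :=
        Finset.mem_filter.mpr ⟨Finset.mem_univ _, hj⟩
      have := Finset.card_pos.mpr ⟨j, hmem⟩
      omega
    rw [hyz]
  | succ m ih =>
    intro y z hc hna
    by_cases hyz : y = z
    · rw [hyz]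
    · obtain ⟨j, hj⟩ := Function.ne_iff.mp hyz
      have h1 : f y i = f (Function.update y j (z j)) i :=
        (update_of_not_arc (hna j hj) y (z j)).symm
      rw [h1]
      apply ih
      · have hsub : (Finset.univ.filter (fun k => Function.update y j (z j) k ≠ z k)) ⊆
            (Finset.univ.filter (fun k => y k ≠ z k)).erase j := by
          intro k hk
          have hk' := (Finset.mem_filter.mp hk).2
          by_cases hkj : k = j
          · subst hkj; simp [Function.update_self] at hk'
          · rw [Function.update_of_ne hkj] at hk'
            exact Finset.mem_erase.mpr ⟨hkj, Finset.mem_filter.mpr ⟨Finset.mem_univ _, hk'⟩⟩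
        have h2 := Finset.card_le_card hsub
        have h3 := Finset.card_erase_of_mem
          (Finset.mem_filter.mpr ⟨Finset.mem_univ j, hj⟩ :
            j ∈ Finset.univ.filter (fun k => y k ≠ z k))
        omega
      · intro k hk
        by_cases hkj : k = j
        · subst hkj; simp [Function.update_self] at hk
        · rw [Function.update_of_ne hkj] at hk
          exact hna k hk

lemma eq_of_agree {n : ℕ} (f : BState n → BState n) (i : Fin n) (y z : BState n)
    (hna : ∀ j, y j ≠ z j → ¬ arc f j i) : f y i = f z i :=
  eq_of_agree_aux f i _ y z le_rfl hna

lemma transGen_walk {α : Type*} {r : α → α → Prop} {a b : α}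
    (h : Relation.TransGen r a b) :
    ∃ L, 1 ≤ L ∧ ∃ w : ℕ → α, w 0 = a ∧ w L = b ∧ ∀ k < L, r (w k) (w (k + 1)) := by
  induction h with
  | @single c hr =>
    refine ⟨1, le_rfl, fun k => if k = 0 then a else c, by simp, by simp, ?_⟩
    intro k hk
    have hk0 : k = 0 := by omega
    subst hk0
    simpa using hr
  | @tail b c _ hbc ih =>
    obtain ⟨L, hL, w, h0, hLb, hstep⟩ := ih
    refine ⟨L + 1, by omega, fun k => if k ≤ L then w k else c, by simp [h0], by simp, ?_⟩
    intro k hk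
    show r (if k ≤ L then w k else c) (if k + 1 ≤ L then w (k + 1) else c)
    rcases Nat.lt_or_ge k L with hkL | hkL
    · rw [if_pos (by omega : k ≤ L), if_pos (by omega : k + 1 ≤ L)]
      exact hstep k hkL
    · have hk' : k = L := by omega
      rw [if_pos (by omega : k ≤ L), if_neg (by omega : ¬ k + 1 ≤ L), hk', hLb]
      exact hbc

lemma not_transGen_arc_self {n : ℕ} {f : BState n → BState n}
    (h : IsEmpty (UCycle f)) (j : Fin n) : ¬ Relation.TransGen (arc f) j j := by
  classical
  intro hj
  obtain ⟨L0, hL0, w0, hw0, hwL, hstep0⟩ := transGen_walk hj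
  have hP : ∃ L, 1 ≤ L ∧ ∃ w : ℕ → Fin n, w L = w 0 ∧ ∀ k < L, arc f (w k) (w (k + 1)) :=
    ⟨L0, hL0, w0, by rw [hw0, hwL], hstep0⟩
  set M := Nat.find hP with hM
  obtain ⟨hM1, v, hvcl, hvstep⟩ := Nat.find_spec hP
  have hinj : ∀ a b : ℕ, a < b → b < M → v a ≠ v b := by
    intro a b hab hbM heq
    have : b - a < M := by omega
    apply Nat.find_min hP this
    refine ⟨by omega, fun k => v (a + k), ?_, ?_⟩
    · show v (a + (b - a)) = v (a + 0)
      have e : a + (b - a) = b := by omega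
      rw [e, ← heq]
      norm_num
    · intro k hk
      have h1 : a + k < M := by omega
      have h2 : a + k + 1 = a + (k + 1) := by omega
      have := hvstep (a + k) h1
      rwa [h2] at this
  have hMe : M - 1 + 1 = M := by omega
  apply h.false
  refine ⟨M - 1, fun k => v k.val, ?_, ?_⟩
  · intro a b hab
    by_contra hne
    have ha : (a : ℕ) < M := by have := a.isLt; omega
    have hb : (b : ℕ) < M := by have := b.isLt; omega
    have hne' : (a : ℕ) ≠ (b : ℕ) := fun hh => hne (Fin.ext hh)
    rcases Nat.lt_or_ge (a : ℕ) (b : ℕ) with hlt | hge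
    · exact hinj a b hlt hb hab
    · exact hinj b a (by omega) ha hab.symm
  · intro k
    show arc f (v k.val) (v (((k + 1 : Fin (M - 1 + 1))) : ℕ))
    have hk : (k : ℕ) < M := by have := k.isLt; omega
    have hadd : ((k + 1 : Fin (M - 1 + 1)) : ℕ) = ((k : ℕ) + 1) % (M - 1 + 1) := by
      simp [Fin.add_def]
    rcases Nat.lt_or_ge ((k : ℕ) + 1) M with hlt | hge
    · have : ((k : ℕ) + 1) % (M - 1 + 1) = (k : ℕ) + 1 := Nat.mod_eq_of_lt (by omega)
      rw [hadd, this]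
      exact hvstep k hk
    · have hkM : (k : ℕ) + 1 = M := by omega
      have : ((k : ℕ) + 1) % (M - 1 + 1) = 0 := by rw [hkM, hMe]; exact Nat.mod_self M
      rw [hadd, this, ← hvcl]
      have h2 := hvstep k hk
      rw [hkM] at h2
      exact h2

open Classical in
noncomputable def arcRank {n : ℕ} (f : BState n → BState n) (i : Fin n) : ℕ :=
  (Finset.univ.filter (fun j => Relation.TransGen (arc f) j i)).card

lemma arcRank_lt_of_arc {n : ℕ} {f : BState n → BState n} (h : IsEmpty (UCycle f))
    {j i : Fin n} (hji : arc f j i) : arcRank f j < arcRank f i := by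
  classical
  unfold arcRank
  apply Finset.card_lt_card
  have hsub : (Finset.univ.filter (fun k => Relation.TransGen (arc f) k j)) ⊆
      (Finset.univ.filter (fun k => Relation.TransGen (arc f) k i)) := by
    intro k hk
    exact Finset.mem_filter.mpr ⟨Finset.mem_univ _, ((Finset.mem_filter.mp hk).2).tail hji⟩
  rw [Finset.ssubset_iff_of_subset hsub]
  exact ⟨j, Finset.mem_filter.mpr ⟨Finset.mem_univ _, Relation.TransGen.single hji⟩,
    fun hmem => not_transGen_arc_self h j ((Finset.mem_filter.mp hmem).2)⟩

lemma eq_of_minRank {n : ℕ} {f : BState n → BState n} (h : IsEmpty (UCycle f))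
    (i : Fin n) (D : Finset (Fin n)) (hmin : ∀ j ∈ D, arcRank f i ≤ arcRank f j)
    (y z : BState n) (hD : ∀ j, y j ≠ z j → j ∈ D) : f y i = f z i :=
  eq_of_agree f i y z (fun j hj hji =>
    absurd (arcRank_lt_of_arc h hji) (not_lt.mpr (hmin j (hD j hj))))

lemma asyncStep_diff {n : ℕ} {f : BState n → BState n} {x y : BState n}
    (hxy : asyncStep f x y) {j : Fin n} (hj : y j ≠ x j) : y j = f x j := by
  obtain ⟨i, hfi, hy⟩ := hxy
  subst hy
  by_cases hji : j = i
  · subst hji; rw [Function.update_self]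
  · rw [Function.update_of_ne hji] at hj; exact absurd rfl hj

lemma gamma_acyclic {n : ℕ} {f : BState n → BState n} (h : IsEmpty (UCycle f))
    (x : BState n) : ¬ Relation.TransGen (asyncStep f) x x := by
  classical
  intro hx
  obtain ⟨L, hL1, p, hp0, hpL, hstep⟩ := transGen_walk hx
  set F : Finset (Fin n) :=
    Finset.univ.filter (fun i => ∃ k < L, p k i ≠ p (k + 1) i) with hF
  have hFne : F.Nonempty := by
    obtain ⟨i, hfi, hy⟩ := hstep 0 hL1
    refine ⟨i, Finset.mem_filter.mpr ⟨Finset.mem_univ _, 0, hL1, ?_⟩⟩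
    rw [hy, Function.update_self]
    exact fun hh => hfi hh.symm
  obtain ⟨i, hiF, hmin⟩ := F.exists_min_image (arcRank f) hFne
  -- any coordinate where p k differs from p 0 is flipped somewhere
  have hdiffF : ∀ k, k ≤ L → ∀ j, p k j ≠ p 0 j → j ∈ F := by
    intro k
    induction k with
    | zero => intro _ j hj; exact absurd rfl hj
    | succ k ih =>
      intro hk j hj
      by_cases h1 : p (k + 1) j = p k j
      · exact ih (by omega) j (by rw [← h1]; exact hj)
      · exact Finset.mem_filter.mpr ⟨Finset.mem_univ _, k, by omega,
          fun hh => h1 hh.symm⟩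
  -- f _ i is constant along the walk
  have hc : ∀ k, k ≤ L → f (p k) i = f (p 0) i := by
    intro k hk
    refine eq_of_minRank h i F hmin (p k) (p 0) ?_
    intro j hj
    exact hdiffF k hk j hj
  set c := f (p 0) i with hcdef
  -- flips: value after flip is c, value before flip is ≠ c
  have hflip : ∀ k, k < L → p k i ≠ p (k + 1) i → p (k + 1) i = c ∧ p k i ≠ c := by
    intro k hk hne
    have h1 : p (k + 1) i = f (p k) i := asyncStep_diff (hstep k hk) (Ne.symm hne)
    rw [hc k (le_of_lt hk)] at h1
    exact ⟨h1, fun hh => hne (hh.trans h1.symm)⟩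
  -- i is flipped at some minimal time
  have hEx : ∃ k, k < L ∧ p k i ≠ p (k + 1) i := by
    have := (Finset.mem_filter.mp hiF).2
    obtain ⟨k, hk, hne⟩ := this
    exact ⟨k, hk, hne⟩
  set K := Nat.find hEx with hK
  obtain ⟨hKL, hKne⟩ := Nat.find_spec hEx
  -- before the first flip, p t i is constant
  have hbefore : ∀ t, t ≤ K → p t i = p 0 i := by
    intro t
    induction t with
    | zero => intro _; rfl
    | succ t ih =>
      intro ht
      have htK : t < K := by omega
      have hnoflip := Nat.find_min hEx htK
      push_neg at hnoflip
      have h1 : p t i = p (t + 1) i := by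
        by_contra hne
        exact hne (hnoflip (by omega))
      rw [← h1]
      exact ih (by omega)
  -- after the first flip, p t i = c
  have hafter : ∀ t, K < t → t ≤ L → p t i = c := by
    intro t
    induction t with
    | zero => omega
    | succ t ih =>
      intro h1 h2
      rcases Nat.lt_or_ge K t with hKt | hKt
      · have ht : p t i = c := ih hKt (by omega)
        by_cases hne : p t i = p (t + 1) i
        · rw [← hne]; exact ht
        · exact (hflip t (by omega) hne).1
      · have e : t = K := by omega
        rw [e]
        exact (hflip K hKL hKne).1
  have h1 : p 0 i ≠ c := by
    have := (hflip K hKL hKne).2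
    rw [hbefore K le_rfl] at this
    exact this
  have h2 : p L i = c := hafter L (by omega) le_rfl
  have h3 : p 0 i = p L i := by rw [hp0, hpL]
  exact h1 (h3.trans h2)

lemma asyncPath_cons {n : ℕ} {f : BState n → BState n} {x y z : BState n} {L : ℕ}
    (hxy : asyncStep f x y) (hp : asyncPath f y z L) : asyncPath f x z (L + 1) := by
  obtain ⟨q, hq0, hqL, hqstep⟩ := hp
  refine ⟨fun k => if k = 0 then x else q (k - 1), by simp, by simp [hqL], ?_⟩
  intro k hk
  show asyncStep f (if k = 0 then x else q (k - 1))
    (if k + 1 = 0 then x else q (k + 1 - 1))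
  rcases Nat.eq_zero_or_pos k with hk0 | hk0
  · subst hk0
    simp only [if_pos rfl, if_neg (by omega : ¬ (0 + 1 = 0))]
    simpa [hq0] using hxy
  · rw [if_neg (by omega : ¬ k = 0), if_neg (by omega : ¬ k + 1 = 0)]
    have e : k + 1 - 1 = (k - 1) + 1 := by omega
    rw [e]
    exact hqstep (k - 1) (by omega)


/-- Robert's theorem (part 3): if `G(f)` is acyclic then `Γ(f)` is acyclic and
from every state there is a geodesic in `Γ(f)` to the unique fixed point. -/
theorem stmt11 {n : ℕ} (f : BState n → BState n) (h : IsEmpty (UCycle f)) :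
    (∀ x : BState n, ¬ Relation.TransGen (asyncStep f) x x) ∧
    ∃ x : BState n, f x = x ∧ (∀ z, f z = z → z = x) ∧
      ∀ y : BState n, asyncPath f y x (hammingDist y x) := by
  classical
  refine ⟨gamma_acyclic h, ?_⟩
  -- existence of a fixed point: minimize the number of reachable states
  obtain ⟨x, -, hxmin⟩ := Finset.exists_min_image Finset.univ
    (fun z : BState n => (Finset.univ.filter
      (fun y => Relation.TransGen (asyncStep f) z y)).card)
    Finset.univ_nonempty
  have hfix : f x = x := by
    by_contra hne
    obtain ⟨i, hi⟩ := Function.ne_iff.mp hne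
    have hstep : asyncStep f x (Function.update x i (f x i)) := ⟨i, hi, rfl⟩
    set y := Function.update x i (f x i) with hy
    have hsub : (Finset.univ.filter (fun z => Relation.TransGen (asyncStep f) y z)) ⊆
        (Finset.univ.filter (fun z => Relation.TransGen (asyncStep f) x z)) := by
      intro z hz
      exact Finset.mem_filter.mpr ⟨Finset.mem_univ _,
        Relation.TransGen.head hstep (Finset.mem_filter.mp hz).2⟩
    have hss : (Finset.univ.filter (fun z => Relation.TransGen (asyncStep f) y z)) ⊂
        (Finset.univ.filter (fun z => Relation.TransGen (asyncStep f) x z)) := by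
      rw [Finset.ssubset_iff_of_subset hsub]
      exact ⟨y, Finset.mem_filter.mpr ⟨Finset.mem_univ _, Relation.TransGen.single hstep⟩,
        fun hmem => gamma_acyclic h y (Finset.mem_filter.mp hmem).2⟩
    exact absurd (hxmin y (Finset.mem_univ y)) (not_le.mpr (Finset.card_lt_card hss))
  refine ⟨x, hfix, ?_, ?_⟩
  · -- uniqueness
    intro z hz
    by_contra hne
    obtain ⟨j0, hj0⟩ := Function.ne_iff.mp hne
    set D : Finset (Fin n) := Finset.univ.filter (fun j => z j ≠ x j) with hD
    have hDne : D.Nonempty := ⟨j0, Finset.mem_filter.mpr ⟨Finset.mem_univ _, hj0⟩⟩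
    obtain ⟨i, hiD, hmin⟩ := D.exists_min_image (arcRank f) hDne
    have heq : f z i = f x i := eq_of_minRank h i D hmin z x
      (fun j hj => Finset.mem_filter.mpr ⟨Finset.mem_univ _, hj⟩)
    rw [hz, hfix] at heq
    exact (Finset.mem_filter.mp hiD).2 heq
  · -- geodesics
    have hgeo : ∀ d (y : BState n), hammingDist y x = d → asyncPath f y x d := by
      intro d
      induction d with
      | zero =>
        intro y hy
        have : y = x := hammingDist_eq_zero.mp hy
        subst this
        exact ⟨fun _ => y, rfl, rfl, fun k hk => absurd hk (Nat.not_lt_zero k)⟩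
      | succ d ih =>
        intro y hy
        set D : Finset (Fin n) := Finset.univ.filter (fun j => y j ≠ x j) with hD
        have hcard : D.card = d + 1 := by
          rw [← hy]
          rfl
        have hDne : D.Nonempty := Finset.card_pos.mp (by omega)
        obtain ⟨i, hiD, hmin⟩ := D.exists_min_image (arcRank f) hDne
        have hyi : y i ≠ x i := (Finset.mem_filter.mp hiD).2
        have hfyi : f y i = x i := by
          have heq : f y i = f x i := eq_of_minRank h i D hmin y x
            (fun j hj => Finset.mem_filter.mpr ⟨Finset.mem_univ _, hj⟩)
          rw [heq, hfix]
        have hstep : asyncStep f y (Function.update y i (x i)) :=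
          ⟨i, by rw [hfyi]; exact hyi.symm, by rw [hfyi]⟩
        have hdist : hammingDist (Function.update y i (x i)) x = d := by
          have hfe : (Finset.univ.filter
              (fun j => Function.update y i (x i) j ≠ x j)) = D.erase i := by
            ext j
            rw [Finset.mem_erase, Finset.mem_filter, hD, Finset.mem_filter]
            by_cases hji : j = i
            · subst hji
              simp [Function.update_self]
            · rw [Function.update_of_ne hji]
              simp [hji]
          show (Finset.univ.filter
            (fun j => Function.update y i (x i) j ≠ x j)).card = d
          rw [hfe, Finset.card_erase_of_mem hiD, hcard]
          omega
        exact asyncPath_cons hstep (ih _ hdist)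
    intro y
    exact hgeo _ y rfl
end

section
/- If G(f) is strongly connected, has at least one arc, and has no positive cycle, then f : {0,1}^n → {0,1}^n has no fixed point. -/
/-- Parity lemma: around a cycle, the number of sign changes of a boolean
labelling is even. -/
lemma parity_lemma (N : ℕ) (h : Fin (N + 1) → Bool) :
    Even ((Finset.univ.filter fun k => (h k == h (k + 1)) = false).card) := by
  have key : (((Finset.univ.filter fun k => (h k == h (k + 1)) = false).card : ℕ) : ZMod 2)
      = 0 := by
    rw [Finset.card_filter, Nat.cast_sum]
    have hpt : ∀ k : Fin (N + 1),
        ((if (h k == h (k + 1)) = false then 1 else 0 : ℕ) : ZMod 2)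
          = (if h k then 1 else 0) + (if h (k + 1) then 1 else 0) := by
      intro k
      cases hk : h k <;> cases hk1 : h (k + 1) <;> simp <;> decide
    rw [Finset.sum_congr rfl (fun k _ => hpt k), Finset.sum_add_distrib]
    have hre : (∑ k : Fin (N + 1), (if h (k + 1) then (1 : ZMod 2) else 0))
        = ∑ k : Fin (N + 1), (if h k then (1 : ZMod 2) else 0) :=
      Fintype.sum_equiv (Equiv.addRight 1)
        (fun k => if h (k + 1) then (1 : ZMod 2) else 0)
        (fun k => if h k then (1 : ZMod 2) else 0) (fun k => rfl)
    rw [hre, ← two_mul, show (2 : ZMod 2) = 0 by decide, zero_mul]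
  exact even_iff_two_dvd.mpr ((ZMod.natCast_eq_zero_iff _ 2).mp key)

/-- If `x` is a fixed point and `f i` is somewhere different from `x i`, then
there is an in-arc `j → i` whose sign is `x j == x i`. -/
lemma exists_signed_in_arc {n : ℕ} (f : BState n → BState n) (x : BState n)
    (hx : f x = x) (i : Fin n) (hnc : ∃ y, f y i ≠ x i) :
    ∃ j, signedArc f (x j == x i) j i := by
  obtain ⟨y0, hy0⟩ := hnc
  suffices H : ∀ d (y : BState n),
      (Finset.univ.filter fun l => y l ≠ x l).card ≤ d → f y i ≠ x i →
        ∃ j, signedArc f (x j == x i) j i from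
    H _ y0 le_rfl hy0
  intro d
  induction d with
  | zero =>
      intro y hcard hfy
      exfalso
      have hfe : (Finset.univ.filter fun l => y l ≠ x l) = ∅ :=
        Finset.card_eq_zero.mp (Nat.le_zero.mp hcard)
      have hyx : y = x := by
        funext l
        by_contra hl
        have : l ∈ (Finset.univ.filter fun l => y l ≠ x l) := by
          simp [hl]
        rw [hfe] at this
        exact absurd this (Finset.notMem_empty l)
      rw [hyx] at hfy
      exact hfy (congrFun hx i)
  | succ d ih =>
      intro y hcard hfy
      have hyx : y ≠ x := by
        rintro rfl
        exact hfy (congrFun hx i)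
      obtain ⟨j, hj⟩ : ∃ j, y j ≠ x j := by
        by_contra hc
        push_neg at hc
        exact hyx (funext hc)
      set z := Function.update y j (x j) with hz_def
      by_cases hz : f z i = x i
      · -- construct the signed arc j → i
        refine ⟨j, ?_⟩
        have hyj : y j = !(x j) := by
          revert hj; cases y j <;> cases x j <;> simp
        have hfyi : f y i = !(x i) := by
          revert hfy; cases f y i <;> cases x i <;> simp
        have hupd : Function.update y j (y j) = y := Function.update_eq_self j y
        have hupn : Function.update y j (!(x j)) = y := by
          rw [← hyj]; exact hupd
        cases hxj : x j <;> cases hxi : x i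
        · -- x j = false, x i = false : positive arc
          show posArc f j i
          have e1 : Function.update y j true = y := by
            have h' := hupn; rw [hxj] at h'; exact h'
          have e2 : Function.update y j false = z := by rw [hz_def, hxj]
          refine ⟨y, ?_, ?_⟩
          · rw [e1, hfyi, hxi]; rfl
          · rw [e2, hz, hxi]
        · -- x j = false, x i = true : negative arc
          show negArc f j i
          have e1 : Function.update y j true = y := by
            have h' := hupn; rw [hxj] at h'; exact h'
          have e2 : Function.update y j false = z := by rw [hz_def, hxj]
          refine ⟨y, ?_, ?_⟩
          · rw [e1, hfyi, hxi]; rfl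
          · rw [e2, hz, hxi]
        · -- x j = true, x i = false : negative arc
          show negArc f j i
          have e1 : Function.update y j true = z := by rw [hz_def, hxj]
          have e2 : Function.update y j false = y := by
            have h' := hupn; rw [hxj] at h'; exact h'
          refine ⟨y, ?_, ?_⟩
          · rw [e1, hz, hxi]
          · rw [e2, hfyi, hxi]; rfl
        · -- x j = true, x i = true : positive arc
          have e1 : Function.update y j true = z := by rw [hz_def, hxj]
          have e2 : Function.update y j false = y := by
            have h' := hupn; rw [hxj] at h'; exact h'
          show posArc f j i
          refine ⟨y, ?_, ?_⟩
          · rw [e1, hz, hxi]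
          · rw [e2, hfyi, hxi]; rfl
      · -- recurse on the closer state z
        apply ih z ?_ hz
        have hmem : j ∈ (Finset.univ.filter fun l => y l ≠ x l) := by simp [hj]
        have hsub : (Finset.univ.filter fun l => z l ≠ x l)
            = (Finset.univ.filter fun l => y l ≠ x l).erase j := by
          ext l
          by_cases hl : l = j <;>
            simp [hz_def, Function.update, hl]
        rw [hsub, Finset.card_erase_of_mem hmem]
        omega

/-- Aracena's theorem: if `G(f)` is strongly connected, has at least one arc,
and has no positive cycle, then `f` has no fixed point. -/
theorem stmt12 {n : ℕ} (f : BState n → BState n)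
    (hsc : ∀ i j : Fin n, Relation.ReflTransGen (arc f) i j)
    (harc : ∃ j i, arc f j i)
    (hpos : ∀ C : SignedCycle f, ¬ C.Positive) :
    ¬ ∃ x : BState n, f x = x := by
  rintro ⟨x, hx⟩
  obtain ⟨j0, i0, harc0⟩ := harc
  -- every vertex has an in-arc
  have hin : ∀ i : Fin n, ∃ j, arc f j i := by
    intro i
    rcases (hsc i0 i).cases_tail with h | ⟨c, _, hc⟩
    · exact ⟨j0, h ▸ harc0⟩
    · exact ⟨c, hc⟩
  -- hence every coordinate function is non-constant
  have hnc : ∀ i : Fin n, ∃ y, f y i ≠ x i := by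
    intro i
    obtain ⟨j, hj⟩ := hin i
    rcases hj with ⟨w, hw1, hw2⟩ | ⟨w, hw1, hw2⟩ <;>
      cases hxi : x i
    · exact ⟨Function.update w j true, by rw [hw1]; simp⟩
    · exact ⟨Function.update w j false, by rw [hw2]; simp⟩
    · exact ⟨Function.update w j false, by rw [hw2]; simp⟩
    · exact ⟨Function.update w j true, by rw [hw1]; simp⟩
  -- choose a signed in-arc for every vertex
  have key : ∀ i : Fin n, ∃ j, signedArc f (x j == x i) j i := fun i =>
    exists_signed_in_arc f x hx i (hnc i)
  choose g hg using key
  -- find a periodic point of g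
  have hper : ∃ (i : Fin n) (p : ℕ), 0 < p ∧ g^[p] i = i := by
    have hninj : ¬ Function.Injective (fun t : Fin (n + 1) => g^[(t : ℕ)] j0) := by
      intro hinj
      have := Fintype.card_le_of_injective _ hinj
      simp at this
    obtain ⟨a, b, hab, hne⟩ := Function.not_injective_iff.mp hninj
    rcases Nat.lt_or_ge (a : ℕ) (b : ℕ) with hlt | hge
    · refine ⟨g^[(a : ℕ)] j0, (b : ℕ) - (a : ℕ), by omega, ?_⟩
      rw [← Function.iterate_add_apply, show (b : ℕ) - (a : ℕ) + (a : ℕ) = (b : ℕ) by omega,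
        hab]
    · have hlt : (b : ℕ) < (a : ℕ) := by
        rcases Nat.lt_or_ge (b : ℕ) (a : ℕ) with h | h
        · exact h
        · exact absurd (Fin.ext (by omega)) hne
      refine ⟨g^[(b : ℕ)] j0, (a : ℕ) - (b : ℕ), by omega, ?_⟩
      rw [← Function.iterate_add_apply, show (a : ℕ) - (b : ℕ) + (b : ℕ) = (a : ℕ) by omega,
        ← hab]
  obtain ⟨i, p, hp, hpi⟩ := hper
  -- take the minimal period
  have hPex : ∃ m, 0 < m ∧ g^[m] i = i := ⟨p, hp, hpi⟩
  set m := Nat.find hPex with hm_def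
  obtain ⟨hm_pos, hm_eq⟩ : 0 < m ∧ g^[m] i = i := Nat.find_spec hPex
  have hm_min : ∀ q, 0 < q → q < m → g^[q] i ≠ i := by
    intro q hq hqm hqi
    exact (Nat.find_min hPex hqm) ⟨hq, hqi⟩
  obtain ⟨N, hN⟩ : ∃ N, m = N + 1 := ⟨m - 1, by omega⟩
  -- build the positive cycle
  let vert : Fin (N + 1) → Fin n := fun k => g^[m - (k : ℕ)] i
  have hvert : ∀ k : Fin (N + 1), g (vert (k + 1)) = vert k := by
    intro k
    by_cases hk : (k : ℕ) < N
    · have h1 : ((k + 1 : Fin (N + 1)) : ℕ) = (k : ℕ) + 1 := by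
        simp [Fin.add_def, Nat.mod_eq_of_lt (by omega : (k : ℕ) + 1 < N + 1)]
      show g (g^[m - ((k + 1 : Fin (N + 1)) : ℕ)] i) = g^[m - (k : ℕ)] i
      rw [h1, ← Function.iterate_succ_apply' g, Nat.succ_eq_add_one,
        show m - ((k : ℕ) + 1) + 1 = m - (k : ℕ) by omega]
    · have hkN : (k : ℕ) = N := by omega
      have h1 : ((k + 1 : Fin (N + 1)) : ℕ) = 0 := by
        simp [Fin.add_def, hkN]
      show g (g^[m - ((k + 1 : Fin (N + 1)) : ℕ)] i) = g^[m - (k : ℕ)] i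
      rw [h1, Nat.sub_zero, hm_eq, hkN, show m - N = 1 by omega]
      rfl
  have hinj : Function.Injective vert := by
    have haux : ∀ a b : Fin (N + 1), (a : ℕ) ≤ (b : ℕ) → vert a = vert b → a = b := by
      intro a b hab heq
      have ha : (a : ℕ) < m := by omega
      have hb : (b : ℕ) < m := by omega
      have h1 : g^[(b : ℕ)] (g^[m - (a : ℕ)] i) = g^[(b : ℕ) - (a : ℕ)] i := by
        rw [← Function.iterate_add_apply,
          show (b : ℕ) + (m - (a : ℕ)) = ((b : ℕ) - (a : ℕ)) + m by omega,
          Function.iterate_add_apply, hm_eq]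
      have h2 : g^[(b : ℕ)] (g^[m - (b : ℕ)] i) = i := by
        rw [← Function.iterate_add_apply, show (b : ℕ) + (m - (b : ℕ)) = m by omega, hm_eq]
      have heq' : g^[m - (a : ℕ)] i = g^[m - (b : ℕ)] i := heq
      have h3 : g^[(b : ℕ) - (a : ℕ)] i = i := by
        rw [← h1, heq']
        exact h2
      by_cases hba : (b : ℕ) - (a : ℕ) = 0
      · exact Fin.ext (by omega)
      · exact absurd h3 (hm_min _ (by omega) (by omega))
    intro a b heq
    rcases Nat.le_total (a : ℕ) (b : ℕ) with h | h
    · exact haux a b h heq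
    · exact (haux b a h heq.symm).symm
  let C : SignedCycle f :=
    { len := N
      vert := vert
      inj := hinj
      sign := fun k => x (vert k) == x (vert (k + 1))
      arcs := by
        intro k
        have h := hg (vert (k + 1))
        rw [hvert k] at h
        exact h }
  exact hpos C (parity_lemma N (fun k => x (vert k)))
end

section
/- If G(f) has no negative cycle, then every attractor of the asynchronous graph Γ(f) is a singleton, i.e. a fixed point of f; in particular Γ(f) has no cyclic attractor. -/
/-- `X` is closed under the asynchronous dynamics. -/
def closedSet {n : ℕ} (f : BState n → BState n) (X : Finset (BState n)) : Prop :=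
  ∀ x ∈ X, ∀ y, asyncStep f x y → y ∈ X

/-- An attractor of `Γ(f)`: a minimal nonempty closed set of states. -/
def IsAttractor {n : ℕ} (f : BState n → BState n) (X : Finset (BState n)) : Prop :=
  X.Nonempty ∧ closedSet f X ∧
    ∀ Y ⊆ X, Y.Nonempty → closedSet f Y → Y = X

/-!
Let `X` be an attractor and `T` the set of coordinates that some transition inside `X` updates.
Suppose `T ≠ ∅`. Choose `i₀ ∈ T` with the fewest ancestors along arcs of `G(f)` leaving `T`;
its ancestors form a strongly connected set `S` that contains every `T`-predecessor of its
members. Closed walks of `G(f)` split into cycles, so they are all positive, and hence `S` is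
balanced: some `σ` makes every arc `j → i` inside `S` positive iff `σ j = σ i`.
Inside `X`, first update coordinates that agree with `σ` until none of them is unstable, then
update coordinates of `S` towards `σ`: by balance this never destabilises a coordinate of `S`
already equal to `σ`, and it ends at a state of `X` where `S` is stable. The states of `X` at
which `S` is stable form a closed set, hence all of `X`; this contradicts `i₀ ∈ S ∩ T`.
So `T = ∅`: every state of `X` is a fixed point, and minimality makes `X` a singleton.
-/

open Function Finset

theorem Relation.exists_mem_forall_reflTransGen_symm {α : Type*} [Finite α] {r : α → α → Prop}
    {T : Set α} (hT : T.Nonempty) (hr : ∀ a b, r a b → a ∈ T) :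
    ∃ c ∈ T, ∀ a, Relation.ReflTransGen r a c → Relation.ReflTransGen r c a := by
  obtain ⟨c, hcT, hmin⟩ :=
    T.exists_min_image (fun c => {a | Relation.ReflTransGen r a c}.ncard) T.toFinite hT
  refine ⟨c, hcT, fun a hac => ?_⟩
  have haT : a ∈ T := by
    rcases hac.cases_head with rfl | ⟨b, hab, -⟩
    exacts [hcT, hr a b hab]
  have hsub : {x | Relation.ReflTransGen r x a} ⊆ {x | Relation.ReflTransGen r x c} :=
    fun x hxa => hxa.trans hac
  show c ∈ {x | Relation.ReflTransGen r x a}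
  rw [Set.eq_of_subset_of_ncard_le hsub (hmin a haT)]
  exact .refl

theorem hammingDist_update_lt {ι : Type*} [Fintype ι] [DecidableEq ι] {β : ι → Type*}
    [∀ i, DecidableEq (β i)] {x y : ∀ i, β i} {i : ι} (h : x i ≠ y i) :
    hammingDist (update x i (y i)) y < hammingDist x y := by
  refine card_lt_card ((ssubset_iff_of_subset fun j => ?_).2 ⟨i, by simpa using h, by simp⟩)
  simp only [mem_filter, mem_univ, true_and]
  rcases eq_or_ne j i with rfl | hji
  · simp
  · rw [update_of_ne hji]
    exact id

namespace Quiver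

variable {V : Type*} [Quiver V]

theorem reachable_of_reflTransGen {α : Type*} {r : α → α → Prop} (φ : α → V)
    (hr : ∀ a b, r a b → Nonempty (φ a ⟶ φ b)) {a b : α} (h : Relation.ReflTransGen r a b) :
    Reachable (φ a) (φ b) := by
  induction h with
  | refl => exact .rfl
  | tail _ hbc ih => exact ih.trans (hr _ _ hbc).some.toPath.reachable

namespace Path

variable {R : Type*} (w : ∀ {i j : V}, (i ⟶ j) → R)

/-- When `p` comes back to a vertex of the simple path `q` built so far, the loop it closes is a
simple cycle, of weight `0`, and is cut out. -/
theorem exists_nodup_addWeight_eq [AddMonoid R]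
    (hcyc : ∀ {a b : V} (q : Path a b) (e : b ⟶ a), q.vertices.Nodup → (q.cons e).addWeight w = 0)
    {a b : V} (p : Path a b) :
    ∃ q : Path a b, q.vertices.Nodup ∧ q.addWeight w = p.addWeight w := by
  induction p with
  | nil => exact ⟨nil, by simp, rfl⟩
  | @cons c d p e ih =>
    obtain ⟨q, hq, hw⟩ := ih
    by_cases hd : d ∈ q.vertices
    · obtain ⟨q₁, q₂, rfl⟩ := exists_eq_comp_of_mem_vertices q hd
      rw [vertices_comp, List.nodup_append] at hq
      obtain ⟨hq₁, hq₂, hdisj⟩ := hq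
      refine ⟨q₁, ?_, ?_⟩
      · rw [← dropLast_append_end_eq, List.nodup_append]
        exact ⟨hq₁, List.nodup_singleton d, fun x hx y hy => hdisj x hx y
          (by rw [List.mem_singleton.mp hy]; exact start_mem_vertices q₂)⟩
      · rw [addWeight_cons, ← hw, addWeight_comp, add_assoc, ← addWeight_cons, hcyc q₂ e hq₂,
          add_zero]
    · refine ⟨q.cons e, ?_, by rw [addWeight_cons, addWeight_cons, hw]⟩
      rw [vertices_cons, List.concat_eq_append, List.nodup_append]
      exact ⟨hq, List.nodup_singleton d, fun x hx y hy => by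
        rw [List.mem_singleton.mp hy]
        rintro rfl
        exact hd hx⟩

theorem addWeight_eq_zero_of_forall_cycle [AddMonoid R]
    (hcyc : ∀ {a b : V} (q : Path a b) (e : b ⟶ a), q.vertices.Nodup → (q.cons e).addWeight w = 0)
    {a : V} (p : Path a a) : p.addWeight w = 0 := by
  obtain ⟨q, hq, hw⟩ := exists_nodup_addWeight_eq w hcyc p
  rw [← hw]
  cases q with
  | nil => exact addWeight_nil w a
  | cons q e =>
    rw [vertices_cons, List.concat_eq_append, List.nodup_append] at hq
    exact absurd rfl (hq.2.2 a (start_mem_vertices q) a (List.mem_singleton_self a))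

theorem exists_potential [AddGroup R] (hclosed : ∀ {a : V} (p : Path a a), p.addWeight w = 0)
    (c : V) :
    ∃ π : V → R, ∀ {a b : V} (e : a ⟶ b), Reachable c a → Reachable b c → π a = w e + π b := by
  have hweight : ∀ a, ∃ r : R, ∀ p : Path a c, Reachable c a → p.addWeight w = r := by
    intro a
    by_cases ha : Reachable a c
    · obtain ⟨p₀⟩ := ha
      refine ⟨p₀.addWeight w, fun p ⟨q⟩ => add_left_cancel (a := q.addWeight w) ?_⟩
      rw [← addWeight_comp, ← addWeight_comp, hclosed, hclosed]
    · exact ⟨0, fun p => absurd p.reachable ha⟩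
  choose π hπ using hweight
  refine ⟨π, @fun a b e hca ⟨q⟩ => ?_⟩
  rw [← hπ a (e.toPath.comp q) hca, ← hπ _ q (hca.trans e.toPath.reachable), addWeight_comp]
  simp [Hom.toPath]

end Path

end Quiver

open Quiver Quiver.Path

section Arcs

variable {n : ℕ} {f : BState n → BState n}

theorem signedArc_of_ne {x : BState n} {j i : Fin n}
    (h : f (update x j true) i ≠ f (update x j false) i) :
    signedArc f (f (update x j true) i) j i := by
  cases hx : f (update x j true) i
  · exact show negArc f j i from ⟨x, hx, by simpa [hx] using h.symm⟩
  · exact show posArc f j i from ⟨x, hx, by simpa [hx] using h.symm⟩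

theorem arc_of_signedArc {s : Bool} {j i : Fin n} (h : signedArc f s j i) : arc f j i := by
  cases s
  exacts [Or.inr h, Or.inl h]

theorem exists_signedArc_of_arc {j i : Fin n} (h : arc f j i) : ∃ s, signedArc f s j i :=
  h.elim (⟨true, ·⟩) (⟨false, ·⟩)

theorem arc_of_apply_update_ne {x : BState n} {j i : Fin n} {b c : Bool}
    (h : f (update x j b) i ≠ f (update x j c) i) : arc f j i := by
  cases b <;> cases c
  · exact absurd rfl h
  · exact arc_of_signedArc (signedArc_of_ne h.symm)
  · exact arc_of_signedArc (signedArc_of_ne h)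
  · exact absurd rfl h

/-- `σ` switches every arc of `G(f)` inside `S` to a positive one: an arc `j → i` inside `S` is
negative exactly when `σ j ≠ σ i` (`+` on `Bool` is `xor`). -/
def Balances (f : BState n → BState n) (S : Finset (Fin n)) (σ : Fin n → Bool) : Prop :=
  ∀ j ∈ S, ∀ i ∈ S, ∀ s, signedArc f s j i → σ j + σ i = !s

theorem Balances.apply_update_eq {S : Finset (Fin n)} {σ : Fin n → Bool} (hσ : Balances f S σ)
    {j i : Fin n} (hj : j ∈ S) (hi : i ∈ S) (x : BState n) (h : f (update x j (!σ j)) i = σ i) :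
    f (update x j (σ j)) i = σ i := by
  by_contra hne
  have hbal := fun hx => hσ j hj i hi _ (signedArc_of_ne (x := x) hx)
  cases hσj : σ j <;> cases hσi : σ i <;> cases ht : f (update x j true) i <;>
    cases hf : f (update x j false) i <;> simp_all [Bool.add_eq_xor]

end Arcs

/-- `G(f)` as a quiver: an arrow `j ⟶ i` is a sign of an arc `j → i`. -/
def InteractionGraph {n : ℕ} (_f : BState n → BState n) : Type := Fin n

namespace InteractionGraph

variable {n : ℕ} {f : BState n → BState n}

instance : Quiver (InteractionGraph f) := ⟨fun j i => {s : Bool // signedArc f s j i}⟩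

def of (f : BState n → BState n) (j : Fin n) : InteractionGraph f := j

/-- The `Bool`-valued weight of a path, `isNeg` summed with `xor`, is the parity of its number of
negative arcs. -/
def isNeg {j i : InteractionGraph f} (e : j ⟶ i) : Bool := !e.1

theorem exists_ofFn_eq_vertices {a b : InteractionGraph f} (q : Path a b) :
    ∃ (m : ℕ) (v : Fin (m + 1) → InteractionGraph f) (s : Fin m → Bool),
      List.ofFn v = q.vertices ∧ v (Fin.last m) = b ∧
      (∀ k, signedArc f (s k) (v k.castSucc) (v k.succ)) ∧ q.addWeight isNeg = ∑ k, !s k := by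
  induction q with
  | nil => exact ⟨0, fun _ => a, Fin.elim0, rfl, rfl, fun k => k.elim0, by simp⟩
  | @cons c d q e ih =>
    obtain ⟨m, v, s, hv, hvc, hs, hw⟩ := ih
    refine ⟨m + 1, Fin.snoc v d, Fin.snoc s e.1, ?_, Fin.snoc_last _ _, fun k => ?_, ?_⟩
    · rw [vertices_cons, ← hv, List.ofFn_succ' (Fin.snoc v d)]
      simp only [Fin.snoc_castSucc, Fin.snoc_last]
    · induction k using Fin.lastCases with
      | last => simpa [hvc] using e.2
      | cast k =>
        rw [Fin.succ_castSucc]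
        simpa only [Fin.snoc_castSucc] using hs k
    · rw [addWeight_cons, hw, Fin.sum_univ_castSucc]
      simp [isNeg]

theorem addWeight_cons_eq_zero_of_nodup (h : ∀ C : SignedCycle f, ¬ C.Negative)
    {a b : InteractionGraph f} (q : Path a b) (e : b ⟶ a) (hq : q.vertices.Nodup) :
    (q.cons e).addWeight isNeg = 0 := by
  obtain ⟨m, v, s, hv, hvb, hs, hw⟩ := exists_ofFn_eq_vertices q
  have hva : v 0 = a := by simpa using congrArg List.head? hv
  let C : SignedCycle f :=
    { len := m, vert := v, inj := List.nodup_ofFn.mp (hv ▸ hq), sign := Fin.snoc s e.1,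
      arcs := fun k => by
        induction k using Fin.lastCases with
        | last => simpa [Fin.last_add_one, hva, hvb] using e.2
        | cast k =>
          rw [Fin.coeSucc_eq_succ]
          simpa only [Fin.snoc_castSucc] using hs k }
  obtain ⟨r, hr⟩ := Nat.not_odd_iff_even.mp (h C)
  calc (q.cons e).addWeight isNeg
      = ∑ k, !C.sign k := by
        rw [addWeight_cons, hw, Fin.sum_univ_castSucc]
        simp [C, isNeg]
    _ = ∑ k, if C.sign k = false then 1 else 0 :=
        Finset.sum_congr rfl fun k _ => by cases C.sign k <;> rfl
    _ = 0 := by rw [Finset.sum_boole, hr, Nat.cast_add, BooleanRing.add_self]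

end InteractionGraph

open InteractionGraph

theorem exists_balanced_ancestors {n : ℕ} {f : BState n → BState n}
    (h : ∀ C : SignedCycle f, ¬ C.Negative) {T : Set (Fin n)} (hT : T.Nonempty) :
    ∃ (S : Finset (Fin n)) (σ : Fin n → Bool), (∃ i ∈ S, i ∈ T) ∧
      (∀ k i, k ∈ T → arc f k i → i ∈ S → k ∈ S) ∧ Balances f S σ := by
  classical
  let r : Fin n → Fin n → Prop := fun j i => j ∈ T ∧ arc f j i
  have hreach {j i : Fin n} (hji : Relation.ReflTransGen r j i) : Reachable (of f j) (of f i) :=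
    reachable_of_reflTransGen (of f) (fun j i hji =>
      (exists_signedArc_of_arc hji.2).elim fun s hs => ⟨(⟨s, hs⟩ : of f j ⟶ of f i)⟩) hji
  obtain ⟨i₀, hi₀, hback⟩ :=
    Relation.exists_mem_forall_reflTransGen_symm (r := r) hT fun _ _ h => h.1
  obtain ⟨π, hπ⟩ := exists_potential isNeg
    (addWeight_eq_zero_of_forall_cycle isNeg (addWeight_cons_eq_zero_of_nodup h)) (of f i₀)
  refine ⟨univ.filter (Relation.ReflTransGen r · i₀), π ∘ of f,
    ⟨i₀, mem_filter.2 ⟨mem_univ _, .refl⟩, hi₀⟩, fun k i hk hki hi => ?_, fun j hj i hi s hs => ?_⟩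
  · simp only [mem_filter, mem_univ, true_and] at hi ⊢
    exact .head ⟨hk, hki⟩ hi
  · simp only [mem_filter, mem_univ, true_and] at hj hi
    have hπj := hπ (⟨s, hs⟩ : of f j ⟶ of f i) (hreach (hback j hj)) (hreach hi)
    simp only [comp_apply, hπj, add_assoc, BooleanRing.add_self, add_zero]
    rfl

section Dynamics

variable {n : ℕ} {f : BState n → BState n} {X : Finset (BState n)}

theorem closedSet_singleton {x : BState n} (hx : f x = x) : closedSet f {x} := by
  rintro y hy - ⟨i, hi, -⟩
  rw [mem_singleton.1 hy] at hi
  exact absurd (congrFun hx i) hi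

theorem exists_mem_forall_apply_eq_of_eq (hX : closedSet f X) {x : BState n} (hx : x ∈ X)
    (σ : Fin n → Bool) : ∃ y ∈ X, ∀ i, y i = σ i → f y i = σ i := by
  induction hd : hammingDist x (fun i => !σ i) using Nat.strong_induction_on generalizing x with
  | _ d ih =>
  by_cases hdone : ∀ i, x i = σ i → f x i = σ i
  · exact ⟨x, hx, hdone⟩
  push Not at hdone
  obtain ⟨i, hxi, hfi⟩ := hdone
  have hstep : update x i (!σ i) ∈ X :=
    Bool.eq_not_iff.2 hfi ▸ hX x hx _ ⟨i, hxi ▸ hfi, rfl⟩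
  exact ih _ (hd ▸ hammingDist_update_lt (y := fun i => !σ i) (by simp [hxi])) hstep rfl

theorem Balances.exists_mem_forall_apply_eq_self {S : Finset (Fin n)} {σ : Fin n → Bool}
    (hσ : Balances f S σ) (hX : closedSet f X) {y : BState n} (hy : y ∈ X)
    (hinv : ∀ i ∈ S, y i = σ i → f y i = σ i) : ∃ z ∈ X, ∀ i ∈ S, f z i = z i := by
  induction hd : hammingDist y σ using Nat.strong_induction_on generalizing y with
  | _ d ih =>
  by_cases hdone : ∀ i ∈ S, f y i = y i
  · exact ⟨y, hy, hdone⟩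
  push Not at hdone
  obtain ⟨i, hiS, hfi⟩ := hdone
  have hyi : y i ≠ σ i := fun h => hfi (by rw [hinv i hiS h, h])
  have hfσ : f y i = σ i := by rw [Bool.eq_not_iff.2 hfi, Bool.eq_not_iff.2 hyi, Bool.not_not]
  have hy' : update y i (σ i) ∈ X := hfσ ▸ hX y hy _ ⟨i, hfi, rfl⟩
  refine ih _ (hd ▸ hammingDist_update_lt hyi) hy' (fun k hk hk' => ?_) rfl
  refine hσ.apply_update_eq hiS hk y ?_
  rw [← Bool.eq_not_iff.2 hyi, update_eq_self]
  rcases eq_or_ne k i with rfl | hki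
  · exact hfσ
  · exact hinv k hk (by rwa [update_of_ne hki] at hk')

theorem closedSet_filter_forall_apply_eq_self (hX : closedSet f X) {S : Finset (Fin n)}
    (hS : ∀ k i, (∃ x ∈ X, f x k ≠ x k) → arc f k i → i ∈ S → k ∈ S) :
    closedSet f (X.filter fun y => ∀ i ∈ S, f y i = y i) := by
  rintro y hy - ⟨k, hk, rfl⟩
  rw [mem_filter] at hy ⊢
  obtain ⟨hyX, hyS⟩ := hy
  have hkS : k ∉ S := fun hkS => hk (hyS k hkS)
  refine ⟨hX y hyX _ ⟨k, hk, rfl⟩, fun i hi => ?_⟩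
  have hik : i ≠ k := by
    rintro rfl
    exact hkS hi
  rw [update_of_ne hik, ← hyS i hi]
  by_contra hne
  refine hkS (hS k i ⟨y, hyX, hk⟩ (arc_of_apply_update_ne (x := y) (b := f y k) (c := y k) ?_) hi)
  rwa [update_eq_self]

end Dynamics

/-- Thomas' second rule (global version): if `G(f)` has no negative cycle, then
every attractor of `Γ(f)` is a singleton fixed point. -/
theorem stmt14 {n : ℕ} (f : BState n → BState n)
    (h : ∀ C : SignedCycle f, ¬ C.Negative) :
    ∀ X : Finset (BState n), IsAttractor f X → ∃ x, X = {x} ∧ f x = x := by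
  rintro X ⟨⟨x₀, hx₀⟩, hX, hmin⟩
  obtain ⟨x, hx, hfix⟩ : ∃ x ∈ X, f x = x := by
    by_contra! hno
    obtain ⟨i, hi⟩ := Function.ne_iff.1 (hno x₀ hx₀)
    obtain ⟨S, σ, ⟨i₀, hi₀S, u, hu, hi₀⟩, hS, hσ⟩ :=
      exists_balanced_ancestors h (T := {i | ∃ x ∈ X, f x i ≠ x i}) ⟨i, x₀, hx₀, hi⟩
    obtain ⟨y, hy, hinv⟩ := exists_mem_forall_apply_eq_of_eq hX hx₀ σ
    obtain ⟨z, hz, hzS⟩ := hσ.exists_mem_forall_apply_eq_self hX hy fun i _ => hinv i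
    have hXS := hmin _ (filter_subset _ X) ⟨z, mem_filter.2 ⟨hz, hzS⟩⟩
      (closedSet_filter_forall_apply_eq_self hX hS)
    rw [← hXS, mem_filter] at hu
    exact hi₀ (hu.2 i₀ hi₀S)
  exact ⟨x, (hmin {x} (singleton_subset_iff.2 hx) (singleton_nonempty x)
    (closedSet_singleton hfix)).symm, hfix⟩
end

section
/- For every n ≥ 1 there exists a monotone Boolean network f : {0,1}^n → {0,1}^n (so G(f) has only positive arcs) and states x, y such that y is a fixed point of f reachable from x in the asynchronous graph Γ(f), but every path from x to y in Γ(f) has length at least 2^{⌊n/2⌋}. -/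
/-!
A forced path `x = p 0 ⇝ p T = y` of `Γ(f)` ends at a fixed point, every `p (t + 1)` has `p t`
as its only predecessor, and no later state lies below `x`; then every path from `x` to `y` runs
backwards along `p`, so it has length at least `T`. If `y` is `x` with its components permuted
by an involution `σ`, conjugating `f` by `σ` gives a forced path from `y` back to `x`. Two new
components `a, b` choose between the two networks (`b` enables `f`, `a` its conjugate): from
`(x, 0, 1)` run to `(y, 0, 1)`, switch `a` on and then `b` off, and run the conjugate to
`(x, 1, 0)`. The new guards only use `∧`, `∨` and upward closed conditions, so monotonicity is
kept, and the result is again a forced path, of length `2T + 2`, whose end is its start with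
`a, b` swapped. Starting from the empty network, `k` doublings give `2k` components and a forced
path of length `2 ^ (k + 1) - 2`.
-/

namespace BooleanNetwork

open Function

/-- Network states with components indexed by `ℕ`, so that networks of different sizes live
on one type; only finitely many components are ever used. -/
abbrev State := ℕ → Bool

def flipAt (u : State) (j : ℕ) : State := update u j (!u j)

def Step (f : State → State) (u v : State) : Prop :=
  ∃ i, f u i ≠ u i ∧ v = update u i (f u i)

def NoArcInto (f : State → State) (v : State) (j : ℕ) : Prop :=
  f (flipAt v j) j = flipAt v j j

def Low (N : ℕ) (u : State) : Prop := ∀ i, N ≤ i → u i = false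

@[simp] lemma flipAt_apply_self (u : State) (j : ℕ) : flipAt u j j = !u j := by
  simp [flipAt]

lemma flipAt_apply_of_ne (u : State) {i j : ℕ} (h : i ≠ j) : flipAt u j i = u i := by
  simp [flipAt, h]

@[simp] lemma flipAt_flipAt (u : State) (j : ℕ) : flipAt (flipAt u j) j = u := by
  simp [flipAt]

lemma Low.flipAt {N : ℕ} {u : State} (hu : Low N u) {j : ℕ} (hj : j < N) :
    Low N (flipAt u j) := fun i hi => by
  rw [flipAt_apply_of_ne _ (by omega)]
  exact hu i hi

lemma update_eq_flipAt {u : State} {j : ℕ} {b : Bool} (h : b ≠ u j) :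
    update u j b = flipAt u j := by
  rw [flipAt, Bool.eq_not_iff.mpr h]

lemma Step.exists_eq_flipAt {f : State → State} {u v : State} (h : Step f u v) :
    ∃ j, u = flipAt v j ∧ ¬ NoArcInto f v j := by
  obtain ⟨j, hne, rfl⟩ := h
  rw [update_eq_flipAt hne]
  exact ⟨j, (flipAt_flipAt u j).symm, by simpa [NoArcInto] using hne⟩

structure ForcedPath (N : ℕ) where
  f : State → State
  monotone : Monotone f
  T : ℕ
  p : ℕ → State
  c : ℕ → ℕ
  low : ∀ t ≤ T, Low N (p t)
  c_lt : ∀ t < T, c t < N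
  p_succ : ∀ t < T, p (t + 1) = flipAt (p t) (c t)
  f_ne : ∀ t < T, f (p t) (c t) ≠ p t (c t)
  noArcInto_succ : ∀ t < T, ∀ j ≠ c t, NoArcInto f (p (t + 1)) j
  fixed : f (p T) = p T
  not_le_p_zero : ∀ t, 0 < t → t ≤ T → ¬ p t ≤ p 0

namespace ForcedPath

variable {N : ℕ} (P : ForcedPath N)

lemma eq_p_of_step {t : ℕ} (ht : t < P.T) {u : State} (h : Step P.f u (P.p (t + 1))) :
    u = P.p t := by
  obtain ⟨j, rfl, hj⟩ := h.exists_eq_flipAt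
  obtain rfl : j = P.c t := by_contra fun hne => hj (P.noArcInto_succ t ht j hne)
  rw [P.p_succ t ht, flipAt_flipAt]

lemma T_le_of_path {L : ℕ} {q : ℕ → State} (h0 : q 0 = P.p 0) (hL : q L = P.p P.T)
    (hq : ∀ k < L, Step P.f (q k) (q (k + 1))) : P.T ≤ L := by
  by_contra! hLT
  have back : ∀ k ≤ L, q (L - k) = P.p (P.T - k) := by
    intro k hk
    induction k with
    | zero => simpa using hL
    | succ k ih =>
      have hstep := hq (L - (k + 1)) (by omega)
      rw [show L - (k + 1) + 1 = L - k by omega, ih (by omega),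
        show P.T - k = P.T - (k + 1) + 1 by omega] at hstep
      exact P.eq_p_of_step (by omega) hstep
  have h := back L le_rfl
  rw [Nat.sub_self, h0] at h
  exact P.not_le_p_zero (P.T - L) (by omega) (by omega) h.ge

end ForcedPath

section Conj

variable {σ : ℕ → ℕ}

def conjNet (σ : ℕ → ℕ) (f : State → State) : State → State := fun u i => f (u ∘ σ) (σ i)

lemma flipAt_comp (hσ : Involutive σ) (u : State) (j : ℕ) :
    flipAt u j ∘ σ = flipAt (u ∘ σ) (σ j) := by
  rw [flipAt, show σ = hσ.toPerm σ from rfl, update_comp_equiv]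
  simp [flipAt, hσ j]

lemma noArcInto_conjNet_iff (hσ : Involutive σ) {f : State → State} {u : State} {j : ℕ} :
    NoArcInto (conjNet σ f) (u ∘ σ) j ↔ NoArcInto f u (σ j) := by
  have h : flipAt (u ∘ σ) j ∘ σ = flipAt u (σ j) := by
    rw [flipAt_comp hσ, comp_assoc, hσ.comp_self, comp_id]
  have h' : flipAt (u ∘ σ) j j = flipAt u (σ j) (σ j) := by rw [← h, comp_apply, hσ j]
  simp only [NoArcInto, conjNet, h, h']

lemma comp_le_comp_iff (hσ : Involutive σ) {u v : State} : u ∘ σ ≤ v ∘ σ ↔ u ≤ v :=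
  ⟨fun h i => by simpa [hσ i] using h (σ i), fun h i => h (σ i)⟩

def ForcedPath.conj {N : ℕ} (P : ForcedPath N) (hσ : Involutive σ)
    (hσN : ∀ i, σ i < N ↔ i < N) : ForcedPath N where
  f := conjNet σ P.f
  monotone u v h i := P.monotone (fun k => h (σ k)) (σ i)
  T := P.T
  p t := P.p t ∘ σ
  c t := σ (P.c t)
  low t ht i hi := P.low t ht (σ i) (by have := hσN i; omega)
  c_lt t ht := (hσN _).mpr (P.c_lt t ht)
  p_succ t ht := by rw [P.p_succ t ht, flipAt_comp hσ]
  f_ne t ht := by simpa [conjNet, Function.comp_assoc, hσ.comp_self, hσ (P.c t)] using P.f_ne t ht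
  noArcInto_succ t ht j hj := (noArcInto_conjNet_iff hσ).mpr <|
    P.noArcInto_succ t ht (σ j) fun h => hj (by rw [← h, hσ j])
  fixed := by
    funext i
    simp [conjNet, Function.comp_assoc, hσ.comp_self, P.fixed]
  not_le_p_zero t ht htT h := P.not_le_p_zero t ht htT ((comp_le_comp_iff hσ).mp h)

end Conj

section Extend

variable {N : ℕ}

def trunc (N : ℕ) (u : State) : State := fun i => if i < N then u i else false

def extend (N : ℕ) (u : State) (a b : Bool) : State :=
  fun i => if i < N then u i else if i = N then a else if i = N + 1 then b else false

lemma trunc_mono : Monotone (trunc N) := fun u v h i => by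
  unfold trunc
  split_ifs
  exacts [h i, le_rfl]

lemma extend_of_lt (u : State) (a b : Bool) {i : ℕ} (hi : i < N) : extend N u a b i = u i := by
  simp [extend, hi]

@[simp] lemma extend_self (u : State) (a b : Bool) : extend N u a b N = a := by
  simp [extend]

@[simp] lemma extend_succ (u : State) (a b : Bool) : extend N u a b (N + 1) = b := by
  simp [extend]

lemma extend_of_le (u : State) (a b : Bool) {i : ℕ} (hi : N + 2 ≤ i) : extend N u a b i = false := by
  simp only [extend]
  split_ifs <;> first | rfl | omega

lemma low_extend (u : State) (a b : Bool) : Low (N + 2) (extend N u a b) :=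
  fun _ hi => extend_of_le u a b hi

lemma trunc_extend {u : State} (hu : Low N u) (a b : Bool) : trunc N (extend N u a b) = u := by
  funext i
  simp only [trunc, extend]
  split_ifs <;> first | rfl | exact (hu i (by omega)).symm

lemma le_extend_iff {u v : State} (hv : Low N v) (a b : Bool) : v ≤ extend N u a b ↔ v ≤ u := by
  refine forall_congr' fun i => ?_
  by_cases hi : i < N
  · rw [extend_of_lt u a b hi]
  · simp [hv i (by omega)]

lemma extend_le_extend_iff {u v : State} (hu : Low N u) {a b a' b' : Bool} :
    extend N u a b ≤ extend N v a' b' ↔ u ≤ v ∧ a ≤ a' ∧ b ≤ b' := by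
  refine ⟨fun h => ⟨fun i => ?_, by simpa using h N, by simpa using h (N + 1)⟩,
    fun ⟨h, ha, hb⟩ i => ?_⟩
  · by_cases hi : i < N
    · simpa [extend_of_lt _ _ _ hi] using h i
    · simp [hu i (by omega)]
  · simp only [extend]
    split_ifs
    exacts [h i, ha, hb, le_rfl]

lemma flipAt_extend_of_lt (u : State) (a b : Bool) {j : ℕ} (hj : j < N) :
    flipAt (extend N u a b) j = extend N (flipAt u j) a b := by
  funext i
  by_cases hij : i = j
  · subst hij
    simp [extend_of_lt _ _ _ hj]
  · simp only [extend, flipAt_apply_of_ne _ hij]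

lemma flipAt_extend_self (u : State) (a b : Bool) :
    flipAt (extend N u a b) N = extend N u (!a) b := by
  funext i
  by_cases hi : i = N
  · subst hi
    simp
  · simp [flipAt_apply_of_ne _ hi, extend, hi]

lemma flipAt_extend_succ (u : State) (a b : Bool) :
    flipAt (extend N u a b) (N + 1) = extend N u a (!b) := by
  funext i
  by_cases hi : i = N + 1
  · subst hi
    simp
  · simp [flipAt_apply_of_ne _ hi, extend, hi]

lemma extend_comp_swap (u : State) (a b : Bool) :
    extend N u a b ∘ Equiv.swap N (N + 1) = extend N u b a := by
  funext i
  simp only [comp_apply, Equiv.swap_apply_def, extend]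
  split_ifs <;> first | rfl | omega

end Extend

lemma lt_or_eq_or_eq_or_exists_add (t T : ℕ) :
    t < T ∨ t = T ∨ t = T + 1 ∨ ∃ s, t = T + 2 + s := by
  rcases lt_or_ge t (T + 2) with h | h
  · omega
  · exact Or.inr (Or.inr (Or.inr ⟨t - (T + 2), by omega⟩))

namespace ForcedPath

variable {N : ℕ} (P Q : ForcedPath N)

structure Gluable : Prop where
  noArcInto_end : ∀ j, P.p P.T j = true → NoArcInto P.f (P.p P.T) j
  start_eq : Q.p 0 = P.p P.T
  noArcInto_start : ∀ j, NoArcInto Q.f (Q.p 0) j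

open Classical in
/-- Below `N`, component `N + 1` switches on the dynamics of `P` and component `N` those
of `Q`. The guard of component `N + 1` keeps `(Q.p t, 1, 1)` from stepping to `(Q.p t, 1, 0)`
for `t > 0`, but fails at `Q.p 0` by `Q.not_le_p_zero`. -/
noncomputable def glueNet : State → State := fun s i =>
  if i < N then (s (N + 1) && P.f (trunc N s) i) || (s N && Q.f (trunc N s) i)
  else if i = N then s N || s (N + 1)
  else if i = N + 1 then s (N + 1) && decide (∃ t, 0 < t ∧ t ≤ Q.T ∧ Q.p t ≤ s)
  else s i

def gluePath (t : ℕ) : State :=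
  if t ≤ P.T then extend N (P.p t) false true
  else if t = P.T + 1 then extend N (P.p P.T) true true
  else extend N (Q.p (t - (P.T + 2))) true false

def glueC (t : ℕ) : ℕ :=
  if t < P.T then P.c t
  else if t = P.T then N
  else if t = P.T + 1 then N + 1
  else Q.c (t - (P.T + 2))

variable {P Q}

lemma glueNet_extend_of_lt {u : State} (hu : Low N u) (a b : Bool) {i : ℕ} (hi : i < N) :
    glueNet P Q (extend N u a b) i = ((b && P.f u i) || (a && Q.f u i)) := by
  simp [glueNet, hi, trunc_extend hu]

lemma glueNet_extend_self (u : State) (a b : Bool) :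
    glueNet P Q (extend N u a b) N = (a || b) := by
  simp [glueNet]

open Classical in
lemma glueNet_extend_succ (u : State) (a b : Bool) :
    glueNet P Q (extend N u a b) (N + 1) =
      (b && decide (∃ t, 0 < t ∧ t ≤ Q.T ∧ Q.p t ≤ u)) := by
  have hguard : (∃ t, 0 < t ∧ t ≤ Q.T ∧ Q.p t ≤ extend N u a b) ↔
      ∃ t, 0 < t ∧ t ≤ Q.T ∧ Q.p t ≤ u := by
    refine exists_congr fun t => and_congr_right fun _ => and_congr_right fun ht => ?_
    exact le_extend_iff (Q.low t ht) a b
  simp [glueNet, hguard]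

lemma glueNet_of_le (s : State) {i : ℕ} (hi : N + 2 ≤ i) : glueNet P Q s i = s i := by
  simp only [glueNet]
  split_ifs <;> first | rfl | omega

lemma glueNet_monotone : Monotone (glueNet P Q) := by
  intro s s' h i
  have hP := P.monotone (trunc_mono (N := N) h)
  have hQ := Q.monotone (trunc_mono (N := N) h)
  have hN := h N
  have hN1 := h (N + 1)
  simp only [glueNet, Bool.le_iff_imp] at *
  split_ifs
  · simp only [Bool.or_eq_true, Bool.and_eq_true]
    rintro (⟨h1, h2⟩ | ⟨h1, h2⟩)
    exacts [Or.inl ⟨hN1 h1, hP i h2⟩, Or.inr ⟨hN h1, hQ i h2⟩]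
  · simp only [Bool.or_eq_true]
    rintro (h1 | h1)
    exacts [Or.inl (hN h1), Or.inr (hN1 h1)]
  · simp only [Bool.and_eq_true, decide_eq_true_iff]
    rintro ⟨h1, t, ht, htT, hts⟩
    exact ⟨hN1 h1, t, ht, htT, hts.trans h⟩
  · exact h i

lemma noArcInto_glueNet_left {u : State} (hu : Low N u) {j : ℕ} (hj : j < N)
    (h : NoArcInto P.f u j) : NoArcInto (glueNet P Q) (extend N u false true) j := by
  unfold NoArcInto at *
  rw [flipAt_extend_of_lt _ _ _ hj, glueNet_extend_of_lt (hu.flipAt hj) _ _ hj,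
    extend_of_lt _ _ _ hj]
  simpa using h

lemma noArcInto_glueNet_right {u : State} (hu : Low N u) {j : ℕ} (hj : j < N)
    (h : NoArcInto Q.f u j) : NoArcInto (glueNet P Q) (extend N u true false) j := by
  unfold NoArcInto at *
  rw [flipAt_extend_of_lt _ _ _ hj, glueNet_extend_of_lt (hu.flipAt hj) _ _ hj,
    extend_of_lt _ _ _ hj]
  simpa using h

lemma noArcInto_glueNet_self (u : State) {a b : Bool} (h : a = false ∨ b = false) :
    NoArcInto (glueNet P Q) (extend N u a b) N := by
  unfold NoArcInto
  rw [flipAt_extend_self, glueNet_extend_self, extend_self]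
  rcases h with rfl | rfl <;> simp

lemma noArcInto_glueNet_succ {u : State} {a b : Bool}
    (h : b = true ∨ ∃ t, 0 < t ∧ t ≤ Q.T ∧ Q.p t ≤ u) :
    NoArcInto (glueNet P Q) (extend N u a b) (N + 1) := by
  unfold NoArcInto
  rw [flipAt_extend_succ, glueNet_extend_succ, extend_succ]
  rcases h with rfl | h
  · simp
  · simp [h]

lemma noArcInto_glueNet_of_le (s : State) {j : ℕ} (hj : N + 2 ≤ j) :
    NoArcInto (glueNet P Q) s j :=
  glueNet_of_le _ hj

variable (P Q)

lemma gluePath_of_le {t : ℕ} (ht : t ≤ P.T) : gluePath P Q t = extend N (P.p t) false true := by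
  simp [gluePath, ht]

lemma gluePath_T_succ : gluePath P Q (P.T + 1) = extend N (P.p P.T) true true := by
  simp [gluePath]

lemma gluePath_add (s : ℕ) : gluePath P Q (P.T + 2 + s) = extend N (Q.p s) true false := by
  simp [gluePath, show ¬ P.T + 2 + s ≤ P.T by omega, show P.T + 2 + s ≠ P.T + 1 by omega]

lemma gluePath_apply_self {t : ℕ} (ht : P.T < t) : gluePath P Q t N = true := by
  rw [gluePath, if_neg (by omega)]
  split_ifs <;> exact extend_self _ _ _

lemma glueC_of_lt {t : ℕ} (ht : t < P.T) : glueC P Q t = P.c t := by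
  simp [glueC, ht]

lemma glueC_T : glueC P Q P.T = N := by
  simp [glueC]

lemma glueC_T_succ : glueC P Q (P.T + 1) = N + 1 := by
  simp [glueC]

lemma glueC_add (s : ℕ) : glueC P Q (P.T + 2 + s) = Q.c s := by
  simp [glueC, show ¬ P.T + 2 + s < P.T by omega, show P.T + 2 + s ≠ P.T by omega,
    show P.T + 2 + s ≠ P.T + 1 by omega]

variable {P Q}

lemma Gluable.noArcInto_glueNet_top (h : Gluable P Q) {j : ℕ} (hj : j < N) :
    NoArcInto (glueNet P Q) (extend N (P.p P.T) true true) j := by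
  have hlow := P.low P.T le_rfl
  have hQ := h.noArcInto_start j
  rw [h.start_eq] at hQ
  unfold NoArcInto at *
  rw [flipAt_extend_of_lt _ _ _ hj, glueNet_extend_of_lt (hlow.flipAt hj) _ _ hj,
    extend_of_lt _ _ _ hj, hQ]
  -- along a component that is off in `P.p P.T`, `Q.f` alone keeps the flipped state
  by_cases hjT : P.p P.T j = false
  · simp [hjT]
  · rw [Bool.not_eq_false] at hjT
    have hP := h.noArcInto_end j hjT
    rw [NoArcInto] at hP
    simp [hP, hjT]

lemma Gluable.p_succ (h : Gluable P Q) (t : ℕ) (ht : t < P.T + 2 + Q.T) :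
    gluePath P Q (t + 1) = flipAt (gluePath P Q t) (glueC P Q t) := by
  obtain ht' | rfl | rfl | ⟨s, rfl⟩ := lt_or_eq_or_eq_or_exists_add t P.T
  · rw [gluePath_of_le P Q ht', gluePath_of_le P Q ht'.le, glueC_of_lt P Q ht', P.p_succ t ht',
      flipAt_extend_of_lt _ _ _ (P.c_lt t ht')]
  · rw [gluePath_T_succ, gluePath_of_le P Q le_rfl, glueC_T, flipAt_extend_self]
    rfl
  · rw [show P.T + 1 + 1 = P.T + 2 + 0 from rfl, gluePath_add, gluePath_T_succ, glueC_T_succ,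
      flipAt_extend_succ, h.start_eq]
    rfl
  · have hs : s < Q.T := by omega
    rw [show P.T + 2 + s + 1 = P.T + 2 + (s + 1) from rfl, gluePath_add, gluePath_add, glueC_add,
      Q.p_succ s hs, flipAt_extend_of_lt _ _ _ (Q.c_lt s hs)]

lemma Gluable.f_ne (h : Gluable P Q) (t : ℕ) (ht : t < P.T + 2 + Q.T) :
    glueNet P Q (gluePath P Q t) (glueC P Q t) ≠ gluePath P Q t (glueC P Q t) := by
  obtain ht' | rfl | rfl | ⟨s, rfl⟩ := lt_or_eq_or_eq_or_exists_add t P.T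
  · have hc := P.c_lt t ht'
    rw [gluePath_of_le P Q ht'.le, glueC_of_lt P Q ht',
      glueNet_extend_of_lt (P.low t ht'.le) _ _ hc, extend_of_lt _ _ _ hc]
    simpa using P.f_ne t ht'
  · simp [gluePath_of_le P Q le_rfl, glueC_T, glueNet_extend_self]
  · have hguard : ¬ ∃ t, 0 < t ∧ t ≤ Q.T ∧ Q.p t ≤ P.p P.T := by
      rintro ⟨t, ht, htT, hle⟩
      exact Q.not_le_p_zero t ht htT (h.start_eq ▸ hle)
    simp [gluePath_T_succ, glueC_T_succ, glueNet_extend_succ, hguard]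
  · have hs : s < Q.T := by omega
    have hc := Q.c_lt s hs
    rw [gluePath_add, glueC_add, glueNet_extend_of_lt (Q.low s hs.le) _ _ hc,
      extend_of_lt _ _ _ hc]
    simpa using Q.f_ne s hs

lemma Gluable.noArcInto_succ (h : Gluable P Q) (t : ℕ) (ht : t < P.T + 2 + Q.T) (j : ℕ)
    (hj : j ≠ glueC P Q t) : NoArcInto (glueNet P Q) (gluePath P Q (t + 1)) j := by
  by_cases hjN : N + 2 ≤ j
  · exact noArcInto_glueNet_of_le _ hjN
  obtain ht' | rfl | rfl | ⟨s, rfl⟩ := lt_or_eq_or_eq_or_exists_add t P.T <;>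
    obtain hjN | rfl | rfl : j < N ∨ j = N ∨ j = N + 1 := by omega
  · rw [gluePath_of_le P Q ht']
    exact noArcInto_glueNet_left (P.low _ ht') hjN
      (P.noArcInto_succ t ht' j (by rwa [glueC_of_lt P Q ht'] at hj))
  · rw [gluePath_of_le P Q ht']
    exact noArcInto_glueNet_self _ (Or.inl rfl)
  · rw [gluePath_of_le P Q ht']
    exact noArcInto_glueNet_succ (Or.inl rfl)
  · rw [gluePath_T_succ]
    exact h.noArcInto_glueNet_top hjN
  · exact absurd (glueC_T P Q) hj.symm
  · rw [gluePath_T_succ]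
    exact noArcInto_glueNet_succ (Or.inl rfl)
  · rw [show P.T + 1 + 1 = P.T + 2 + 0 from rfl, gluePath_add, h.start_eq]
    exact noArcInto_glueNet_right (P.low _ le_rfl) hjN (h.start_eq ▸ h.noArcInto_start j)
  · rw [show P.T + 1 + 1 = P.T + 2 + 0 from rfl, gluePath_add]
    exact noArcInto_glueNet_self _ (Or.inr rfl)
  · exact absurd (glueC_T_succ P Q) hj.symm
  · have hs : s < Q.T := by omega
    rw [show P.T + 2 + s + 1 = P.T + 2 + (s + 1) from rfl, gluePath_add]
    exact noArcInto_glueNet_right (Q.low _ hs) hjN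
      (Q.noArcInto_succ s hs j (by rwa [glueC_add] at hj))
  · rw [show P.T + 2 + s + 1 = P.T + 2 + (s + 1) from rfl, gluePath_add]
    exact noArcInto_glueNet_self _ (Or.inr rfl)
  · rw [show P.T + 2 + s + 1 = P.T + 2 + (s + 1) from rfl, gluePath_add]
    exact noArcInto_glueNet_succ (Or.inr ⟨s + 1, by omega, by omega, le_rfl⟩)

lemma glueNet_fixed :
    glueNet P Q (gluePath P Q (P.T + 2 + Q.T)) = gluePath P Q (P.T + 2 + Q.T) := by
  rw [gluePath_add]
  funext i
  obtain hi | rfl | rfl | hi : i < N ∨ i = N ∨ i = N + 1 ∨ N + 2 ≤ i := by omega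
  · rw [glueNet_extend_of_lt (Q.low _ le_rfl) _ _ hi, extend_of_lt _ _ _ hi, Q.fixed]
    simp
  · simp [glueNet_extend_self]
  · simp [glueNet_extend_succ]
  · exact glueNet_of_le _ hi

lemma gluePath_not_le_zero {t : ℕ} (ht : 0 < t) :
    ¬ gluePath P Q t ≤ gluePath P Q 0 := by
  intro hle
  rw [gluePath_of_le P Q (Nat.zero_le _)] at hle
  by_cases htP : t ≤ P.T
  · rw [gluePath_of_le P Q htP, extend_le_extend_iff (P.low t htP)] at hle
    exact P.not_le_p_zero t ht htP hle.1
  · have hN := hle N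
    rw [gluePath_apply_self P Q (not_le.mp htP), extend_self] at hN
    exact Bool.false_ne_true (Bool.le_iff_imp.mp hN rfl)

noncomputable def glue (h : Gluable P Q) : ForcedPath (N + 2) where
  f := glueNet P Q
  monotone := glueNet_monotone
  T := P.T + 2 + Q.T
  p := gluePath P Q
  c := glueC P Q
  low t _ := by
    unfold gluePath
    split_ifs <;> exact low_extend _ _ _
  c_lt t ht := by
    obtain ht' | rfl | rfl | ⟨s, rfl⟩ := lt_or_eq_or_eq_or_exists_add t P.T
    · rw [glueC_of_lt P Q ht']; have := P.c_lt t ht'; omega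
    · rw [glueC_T]; omega
    · rw [glueC_T_succ]; omega
    · rw [glueC_add]; have := Q.c_lt s (by omega); omega
  p_succ := h.p_succ
  f_ne := h.f_ne
  noArcInto_succ := h.noArcInto_succ
  fixed := glueNet_fixed
  not_le_p_zero _ ht _ := gluePath_not_le_zero ht

variable (h : Gluable P Q)

lemma glue_f : (glue h).f = glueNet P Q := rfl

lemma glue_T : (glue h).T = P.T + 2 + Q.T := rfl

lemma glue_p : (glue h).p = gluePath P Q := rfl

end ForcedPath

structure SymmetricForcedPath (N : ℕ) extends ForcedPath N where
  σ : ℕ → ℕ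
  involutive : Involutive σ
  σ_lt_iff : ∀ i, σ i < N ↔ i < N
  noArcInto_p_zero : ∀ j, NoArcInto f (p 0) j
  noArcInto_p_T : ∀ j, p T j = true → NoArcInto f (p T) j
  p_T_comp : p T ∘ σ = p 0

namespace SymmetricForcedPath

variable {N : ℕ} (A : SymmetricForcedPath N)

/-- Runs from `A.p A.T = A.p 0 ∘ σ` back to `A.p 0 = A.p A.T ∘ σ`. -/
def conj : ForcedPath N := A.toForcedPath.conj A.involutive A.σ_lt_iff

lemma p_zero_comp : A.p 0 ∘ A.σ = A.p A.T := by
  rw [← A.p_T_comp, comp_assoc, A.involutive.comp_self, comp_id]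

lemma gluable_conj : A.Gluable A.conj where
  noArcInto_end := A.noArcInto_p_T
  start_eq := A.p_zero_comp
  noArcInto_start j := (noArcInto_conjNet_iff A.involutive).mpr (A.noArcInto_p_zero (A.σ j))

noncomputable def double : SymmetricForcedPath (N + 2) where
  toForcedPath := A.glue A.gluable_conj
  σ := Equiv.swap N (N + 1)
  involutive := Equiv.swap_apply_self N (N + 1)
  σ_lt_iff i := by
    rw [Equiv.swap_apply_def]
    split_ifs <;> omega
  noArcInto_p_zero j := by
    rw [ForcedPath.glue_f, ForcedPath.glue_p, ForcedPath.gluePath_of_le _ _ (Nat.zero_le _)]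
    obtain hj | rfl | rfl | hj : j < N ∨ j = N ∨ j = N + 1 ∨ N + 2 ≤ j := by omega
    · exact ForcedPath.noArcInto_glueNet_left (A.low 0 (Nat.zero_le _)) hj (A.noArcInto_p_zero j)
    · exact ForcedPath.noArcInto_glueNet_self _ (Or.inl rfl)
    · exact ForcedPath.noArcInto_glueNet_succ (Or.inl rfl)
    · exact ForcedPath.noArcInto_glueNet_of_le _ hj
  noArcInto_p_T j hj := by
    rw [ForcedPath.glue_f, ForcedPath.glue_p, ForcedPath.glue_T] at *
    rw [ForcedPath.gluePath_add] at hj ⊢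
    obtain hjN | rfl | rfl | hjN : j < N ∨ j = N ∨ j = N + 1 ∨ N + 2 ≤ j := by omega
    · rw [extend_of_lt _ _ _ hjN] at hj
      exact ForcedPath.noArcInto_glueNet_right (A.conj.low _ le_rfl) hjN
        ((noArcInto_conjNet_iff A.involutive).mpr (A.noArcInto_p_T (A.σ j) hj))
    · exact ForcedPath.noArcInto_glueNet_self _ (Or.inr rfl)
    · simp at hj
    · exact ForcedPath.noArcInto_glueNet_of_le _ hjN
  p_T_comp := by
    rw [ForcedPath.glue_p, ForcedPath.glue_T, ForcedPath.gluePath_add,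
      ForcedPath.gluePath_of_le _ _ (Nat.zero_le _), extend_comp_swap]
    exact congrArg (extend N · false true) A.p_T_comp

lemma double_T : A.double.T = A.T + 2 + A.T := rfl

def empty : SymmetricForcedPath 0 where
  f := id
  monotone := monotone_id
  T := 0
  p _ := ⊥
  c _ := 0
  low _ _ _ _ := rfl
  c_lt _ h := absurd h (Nat.not_lt_zero _)
  p_succ _ h := absurd h (Nat.not_lt_zero _)
  f_ne _ h := absurd h (Nat.not_lt_zero _)
  noArcInto_succ _ h := absurd h (Nat.not_lt_zero _)
  fixed := rfl
  not_le_p_zero _ h h' := absurd h (by omega)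
  σ := id
  involutive _ := rfl
  σ_lt_iff _ := Iff.rfl
  noArcInto_p_zero _ := rfl
  noArcInto_p_T _ h := absurd h Bool.false_ne_true
  p_T_comp := rfl

end SymmetricForcedPath

noncomputable def iterate : (k : ℕ) → SymmetricForcedPath (2 * k)
  | 0 => .empty
  | k + 1 => (iterate k).double

lemma iterate_T_add_two (k : ℕ) : (iterate k).T + 2 = 2 ^ (k + 1) := by
  induction k with
  | zero => rfl
  | succ k ih =>
    rw [iterate, SymmetricForcedPath.double_T, pow_succ]
    omega

def ForcedPath.switchOn : ForcedPath 1 where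
  f u := update u 0 true
  monotone u v h i := by
    by_cases hi : i = 0
    · subst hi
      simp
    · simpa [hi] using h i
  T := 1
  p t := if t = 0 then ⊥ else update ⊥ 0 true
  c _ := 0
  low t _ i hi := by
    split_ifs
    · rfl
    · simp [show i ≠ 0 by omega]
  c_lt _ _ := Nat.one_pos
  p_succ t ht := by
    obtain rfl : t = 0 := by omega
    rfl
  f_ne t ht := by
    obtain rfl : t = 0 := by omega
    simp
  noArcInto_succ t ht j hj := by
    obtain rfl : t = 0 := by omega
    simp [NoArcInto, hj]
  fixed := by simp
  not_le_p_zero t ht htT h := by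
    obtain rfl : t = 1 := by omega
    simpa [Bool.le_iff_imp] using h 0

lemma exists_forcedPath {n : ℕ} (hn : 1 ≤ n) : ∃ N ≤ n, ∃ P : ForcedPath N, 2 ^ (n / 2) ≤ P.T := by
  obtain rfl | hn := hn.eq_or_lt
  · exact ⟨1, le_rfl, .switchOn, le_rfl⟩
  · refine ⟨2 * (n / 2), by omega, (iterate (n / 2)).toForcedPath, ?_⟩
    have hT := iterate_T_add_two (n / 2)
    have h2 : 2 ≤ 2 ^ (n / 2) := Nat.le_self_pow (by omega) 2
    rw [pow_succ] at hT
    omega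

section Restrict

variable {n : ℕ}

def ofFin (x : BState n) : State := fun k => if h : k < n then x ⟨k, h⟩ else false

def toFin (n : ℕ) (u : State) : BState n := fun i => u i

def restrictNet (n : ℕ) (f : State → State) : BState n → BState n :=
  fun x => toFin n (f (ofFin x))

lemma ofFin_apply (x : BState n) (i : Fin n) : ofFin x i = x i := by
  simp [ofFin]

lemma ofFin_toFin {u : State} (hu : Low n u) : ofFin (toFin n u) = u := by
  funext k
  by_cases hk : k < n
  · simp [ofFin, toFin, hk]
  · simp [ofFin, hk, hu k (by omega)]

lemma ofFin_mono : Monotone (ofFin (n := n)) := fun x y h k => by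
  unfold ofFin
  split_ifs
  exacts [h _, le_rfl]

lemma ofFin_update (x : BState n) (i : Fin n) (b : Bool) :
    ofFin (update x i b) = update (ofFin x) i b := by
  funext k
  by_cases hk : k < n
  · by_cases hki : k = i
    · subst hki
      simp [ofFin]
    · simp [ofFin, hk, hki, Fin.ext_iff]
  · simp [ofFin, hk, show k ≠ i by omega]

lemma Low.mono {N : ℕ} {u : State} (hu : Low N u) (hN : N ≤ n) : Low n u :=
  fun i hi => hu i (hN.trans hi)

lemma step_ofFin {f : State → State} {x y : BState n} (h : asyncStep (restrictNet n f) x y) :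
    Step f (ofFin x) (ofFin y) := by
  obtain ⟨i, hne, rfl⟩ := h
  refine ⟨i, by simpa [restrictNet, toFin, ofFin_apply] using hne, ?_⟩
  rw [ofFin_update]
  rfl

namespace ForcedPath

variable {N : ℕ} (P : ForcedPath N)

lemma monotone_restrictNet : Monotone (restrictNet n P.f) :=
  fun _ _ h i => P.monotone (ofFin_mono h) i

lemma restrictNet_fixed (hN : N ≤ n) :
    restrictNet n P.f (toFin n (P.p P.T)) = toFin n (P.p P.T) := by
  rw [restrictNet, ofFin_toFin ((P.low _ le_rfl).mono hN), P.fixed]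

lemma asyncPath_toFin (hN : N ≤ n) :
    asyncPath (restrictNet n P.f) (toFin n (P.p 0)) (toFin n (P.p P.T)) P.T := by
  refine ⟨fun t => toFin n (P.p t), rfl, rfl, fun t ht => ?_⟩
  have hc : P.c t < n := (P.c_lt t ht).trans_le hN
  refine ⟨⟨P.c t, hc⟩, ?_, ?_⟩
  · simpa [restrictNet, toFin, ofFin_toFin ((P.low t ht.le).mono hN)] using P.f_ne t ht
  · funext i
    simp only [restrictNet, ofFin_toFin ((P.low t ht.le).mono hN), toFin, update_apply,
      Fin.ext_iff, P.p_succ t ht]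
    split_ifs with hi
    · rw [hi, flipAt_apply_self, ← Bool.eq_not_iff.mpr (P.f_ne t ht)]
    · exact flipAt_apply_of_ne _ hi

lemma T_le_of_asyncPath (hN : N ≤ n) {L : ℕ}
    (h : asyncPath (restrictNet n P.f) (toFin n (P.p 0)) (toFin n (P.p P.T)) L) : P.T ≤ L := by
  obtain ⟨q, h0, hL, hq⟩ := h
  refine P.T_le_of_path (q := fun k => ofFin (q k)) ?_ ?_ fun k hk => step_ofFin (hq k hk)
  · rw [h0, ofFin_toFin ((P.low _ (Nat.zero_le _)).mono hN)]
  · rw [hL, ofFin_toFin ((P.low _ le_rfl).mono hN)]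

end ForcedPath

end Restrict

end BooleanNetwork

/-- There are monotone networks with fixed points reachable only by
exponentially long asynchronous paths. -/
theorem stmt16 : ∀ n : ℕ, 1 ≤ n → ∃ f : BState n → BState n, Monotone f ∧
    ∃ x y : BState n, f y = y ∧ (∃ L, asyncPath f x y L) ∧
      ∀ L, asyncPath f x y L → 2 ^ (n / 2) ≤ L := by
  intro n hn
  obtain ⟨N, hN, P, hT⟩ := BooleanNetwork.exists_forcedPath hn
  exact ⟨BooleanNetwork.restrictNet n P.f, P.monotone_restrictNet,
    BooleanNetwork.toFin n (P.p 0), BooleanNetwork.toFin n (P.p P.T),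
    P.restrictNet_fixed hN, ⟨P.T, P.asyncPath_toFin hN⟩,
    fun L hL => hT.trans (P.T_le_of_asyncPath hN hL)⟩
end
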